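/- arXiv:2506.03767 — 10 statements merged into one kernel-verified Lean document; each statement's English description precedes it below -/
import Mathlib

section
/- Let φ¹ : D_E¹ ⊗ D_V¹ → D_E¹ ⊗ D_V¹ and φ² : D_E² ⊗ D_V² → D_E² ⊗ D_V² be K-linear maps, and let λ, μ ∈ K. Define the K-linear endomorphism Φ = φ¹ ⊕_{λ,μ} φ² of (D_E¹ ⊕ D_E²) ⊗ (D_V¹ ⊕ D_V²) by: Φ(a₁ ⊗ b₁) = φ¹(a₁ ⊗ b₁), Φ(a₂ ⊗ b₂) = φ²(a₂ ⊗ b₂), Φ(a₁ ⊗ b₂) = λ·(a₁ ⊗ b₂), and Φ(a₂ ⊗ b₁) = μ·(a₂ ⊗ b₁), for all a_i ∈ D_E^i and b_i ∈ D_V^i (i = 1, 2), the inclusions into the direct sums being understood. Then Φ is tree-compatible (with edge space D_E¹ ⊕ D_E² and vertex space D_V¹ ⊕ D_V²) if, and only if, both φ¹ and φ² are tree-compatible. -/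
open TensorProduct

/-- The endomorphism `φ₁₃ = (τ ⊗ id) ∘ (id ⊗ φ) ∘ (τ ⊗ id)` of `D_E ⊗ D_E ⊗ D_V`,
where `τ` is the flip of the first two factors. -/
noncomputable def phi13 (K : Type*) [CommSemiring K] (E V : Type*)
    [AddCommMonoid E] [Module K E] [AddCommMonoid V] [Module K V]
    (φ : TensorProduct K E V →ₗ[K] TensorProduct K E V) :
    TensorProduct K E (TensorProduct K E V) →ₗ[K] TensorProduct K E (TensorProduct K E V) :=
  (TensorProduct.leftComm K E E V).toLinearMap ∘ₗ LinearMap.lTensor E φ ∘ₗ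
    (TensorProduct.leftComm K E E V).toLinearMap

/-- `φ` is tree-compatible if `φ₁₃ ∘ φ₂₃ = φ₂₃ ∘ φ₁₃`, where `φ₂₃ = id ⊗ φ`. -/
noncomputable def TreeCompatible (K : Type*) [CommSemiring K] (E V : Type*)
    [AddCommMonoid E] [Module K E] [AddCommMonoid V] [Module K V]
    (φ : TensorProduct K E V →ₗ[K] TensorProduct K E V) : Prop :=
  phi13 K E V φ ∘ₗ LinearMap.lTensor E φ = LinearMap.lTensor E φ ∘ₗ phi13 K E V φ

/-!
Let `ι_i ⊗ ι_k` be the inclusion of `D_E^i ⊗ D_V^k`. The hypotheses say that `Φ` is intertwined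
by `ι_i ⊗ ι_k` with `ψ_ik`, where `ψ_ii = φ^i` and `ψ_12`, `ψ_21` are the scalars `λ`, `μ`.
Hence on the summand `D_E^i ⊗ D_E^j ⊗ D_V^k` of `D_E ⊗ D_E ⊗ D_V`, `Φ₁₃` acts as `ψ_ik` on the
first and third factors and `Φ₂₃` as `ψ_jk` on the last two. These commute if one of them is a
scalar, and otherwise `i = j = k` and they commute by tree-compatibility of `φ^i`; the eight
summands span, so `Φ` is tree-compatible. Conversely the summand with `i = j = k` is embedded
injectively (everything is flat over a field), so commutation of `Φ₁₃` and `Φ₂₃` restricts to it.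
-/

open LinearMap

section Intertwining

variable {R M N : Type*} [CommSemiring R] [AddCommMonoid M] [Module R M]
  [AddCommMonoid N] [Module R N] {F G : Module.End R N} {p q : Module.End R M} {J : M →ₗ[R] N}

theorem comp_comp_of_intertwines (hp : F ∘ₗ J = J ∘ₗ p) (hq : G ∘ₗ J = J ∘ₗ q) :
    F ∘ₗ G ∘ₗ J = J ∘ₗ p ∘ₗ q := by
  rw [hq, ← comp_assoc, hp, comp_assoc]

theorem comp_comp_eq_of_intertwines (hp : F ∘ₗ J = J ∘ₗ p) (hq : G ∘ₗ J = J ∘ₗ q)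
    (h : Commute p q) : F ∘ₗ G ∘ₗ J = G ∘ₗ F ∘ₗ J := by
  rw [comp_comp_of_intertwines hp hq, comp_comp_of_intertwines hq hp, ← Module.End.mul_eq_comp,
    h.eq, Module.End.mul_eq_comp]

theorem Commute.of_intertwines (hJ : Function.Injective J) (hp : F ∘ₗ J = J ∘ₗ p)
    (hq : G ∘ₗ J = J ∘ₗ q) (h : Commute F G) : Commute p q := by
  have key : J ∘ₗ p ∘ₗ q = J ∘ₗ q ∘ₗ p := by
    rw [← comp_comp_of_intertwines hp hq, ← comp_comp_of_intertwines hq hp, ← comp_assoc,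
      ← Module.End.mul_eq_comp, h.eq, Module.End.mul_eq_comp, comp_assoc]
  ext x
  exact hJ (LinearMap.congr_fun key x)

theorem comp_eq_comp_smul_id {c : R} (h : F ∘ₗ J = c • J) :
    F ∘ₗ J = J ∘ₗ (c • LinearMap.id) := by
  rw [h, comp_smul, comp_id]

end Intertwining

section Blocks

variable {R : Type*} [CommSemiring R] {A B C X Y : Type*}
  [AddCommMonoid A] [Module R A] [AddCommMonoid B] [Module R B] [AddCommMonoid C] [Module R C]
  [AddCommMonoid X] [Module R X] [AddCommMonoid Y] [Module R Y]

variable (R B) in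
/-- `ψ` acting on the first and third factors; `phi13 R E V φ` is `act13 R E φ` by definition. -/
noncomputable def act13 (ψ : A ⊗[R] C →ₗ[R] A ⊗[R] C) :
    A ⊗[R] (B ⊗[R] C) →ₗ[R] A ⊗[R] (B ⊗[R] C) :=
  (leftComm R B A C).toLinearMap ∘ₗ lTensor B ψ ∘ₗ (leftComm R A B C).toLinearMap

theorem act13_smul_id (c : R) :
    act13 R B (c • LinearMap.id : Module.End R (A ⊗[R] C)) = c • LinearMap.id := by
  ext a b c
  simp [act13]

theorem leftComm_comp_map_map {A' B' C' : Type*} [AddCommMonoid A'] [Module R A']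
    [AddCommMonoid B'] [Module R B'] [AddCommMonoid C'] [Module R C']
    (f : A →ₗ[R] A') (g : B →ₗ[R] B') (h : C →ₗ[R] C') :
    (leftComm R A' B' C').toLinearMap ∘ₗ map f (map g h) =
      map g (map f h) ∘ₗ (leftComm R A B C).toLinearMap := by
  ext a b c
  simp

variable {Φ : Module.End R (X ⊗[R] Y)} {ιA : A →ₗ[R] X} {ιB : B →ₗ[R] X} {ιC : C →ₗ[R] Y}

theorem lTensor_comp_map_map {χ : Module.End R (B ⊗[R] C)}
    (hχ : Φ ∘ₗ map ιB ιC = map ιB ιC ∘ₗ χ) :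
    lTensor X Φ ∘ₗ map ιA (map ιB ιC) = map ιA (map ιB ιC) ∘ₗ lTensor A χ := by
  rw [lTensor_comp_map, hχ, map_comp_lTensor]

theorem phi13_comp_map_map {ψ : Module.End R (A ⊗[R] C)}
    (hψ : Φ ∘ₗ map ιA ιC = map ιA ιC ∘ₗ ψ) :
    phi13 R X Y Φ ∘ₗ map ιA (map ιB ιC) = map ιA (map ιB ιC) ∘ₗ act13 R B ψ := by
  calc phi13 R X Y Φ ∘ₗ map ιA (map ιB ιC)
      = (leftComm R X X Y).toLinearMap ∘ₗ (lTensor X Φ ∘ₗ map ιB (map ιA ιC)) ∘ₗ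
          (leftComm R A B C).toLinearMap := by
        simp only [phi13, comp_assoc, leftComm_comp_map_map]
    _ = ((leftComm R X X Y).toLinearMap ∘ₗ map ιB (map ιA ιC)) ∘ₗ lTensor B ψ ∘ₗ
          (leftComm R A B C).toLinearMap := by
        rw [lTensor_comp_map_map hψ, comp_assoc, comp_assoc]
    _ = map ιA (map ιB ιC) ∘ₗ act13 R B ψ := by
        rw [leftComm_comp_map_map]
        simp only [act13, comp_assoc]

theorem commute_act13_smul_id (c : R) (f : Module.End R (A ⊗[R] (B ⊗[R] C))) :
    Commute (act13 R B (c • LinearMap.id : Module.End R (A ⊗[R] C))) f := by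
  rw [act13_smul_id]
  exact (Commute.one_left f).smul_left c

theorem commute_lTensor_smul_id (c : R) (f : Module.End R (A ⊗[R] (B ⊗[R] C))) :
    Commute f (lTensor A (c • LinearMap.id : Module.End R (B ⊗[R] C))) := by
  rw [lTensor_smul, lTensor_id]
  exact (Commute.one_right f).smul_right c

theorem commute_phi13_lTensor_on_tmul
    {ψ : Module.End R (A ⊗[R] C)} {χ : Module.End R (B ⊗[R] C)}
    (hψ : Φ ∘ₗ map ιA ιC = map ιA ιC ∘ₗ ψ) (hχ : Φ ∘ₗ map ιB ιC = map ιB ιC ∘ₗ χ)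
    (h : Commute (act13 R B ψ) (lTensor A χ)) (a : A) (b : B) (c : C) :
    phi13 R X Y Φ (lTensor X Φ (ιA a ⊗ₜ (ιB b ⊗ₜ ιC c))) =
      lTensor X Φ (phi13 R X Y Φ (ιA a ⊗ₜ (ιB b ⊗ₜ ιC c))) :=
  LinearMap.congr_fun
    (comp_comp_eq_of_intertwines (phi13_comp_map_map hψ) (lTensor_comp_map_map hχ) h)
    (a ⊗ₜ (b ⊗ₜ c))

theorem TreeCompatible.of_intertwines {ιE : A →ₗ[R] X} {ιV : C →ₗ[R] Y}
    {φ : Module.End R (A ⊗[R] C)} (hι : Function.Injective (map ιE (map ιE ιV)))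
    (hφ : Φ ∘ₗ map ιE ιV = map ιE ιV ∘ₗ φ) (H : TreeCompatible R X Y Φ) :
    TreeCompatible R A C φ :=
  Commute.of_intertwines hι (phi13_comp_map_map hφ) (lTensor_comp_map_map hφ) H

end Blocks

theorem directSum_treeCompatible_general (K : Type*) [Field K]
    (E₁ E₂ V₁ V₂ : Type*)
    [AddCommGroup E₁] [Module K E₁] [AddCommGroup E₂] [Module K E₂]
    [AddCommGroup V₁] [Module K V₁] [AddCommGroup V₂] [Module K V₂]
    (φ₁ : TensorProduct K E₁ V₁ →ₗ[K] TensorProduct K E₁ V₁)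
    (φ₂ : TensorProduct K E₂ V₂ →ₗ[K] TensorProduct K E₂ V₂)
    (lam mu : K)
    (Φ : TensorProduct K (E₁ × E₂) (V₁ × V₂) →ₗ[K] TensorProduct K (E₁ × E₂) (V₁ × V₂))
    (h11 : Φ ∘ₗ TensorProduct.map (LinearMap.inl K E₁ E₂) (LinearMap.inl K V₁ V₂)
        = TensorProduct.map (LinearMap.inl K E₁ E₂) (LinearMap.inl K V₁ V₂) ∘ₗ φ₁)
    (h22 : Φ ∘ₗ TensorProduct.map (LinearMap.inr K E₁ E₂) (LinearMap.inr K V₁ V₂)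
        = TensorProduct.map (LinearMap.inr K E₁ E₂) (LinearMap.inr K V₁ V₂) ∘ₗ φ₂)
    (h12 : Φ ∘ₗ TensorProduct.map (LinearMap.inl K E₁ E₂) (LinearMap.inr K V₁ V₂)
        = lam • TensorProduct.map (LinearMap.inl K E₁ E₂) (LinearMap.inr K V₁ V₂))
    (h21 : Φ ∘ₗ TensorProduct.map (LinearMap.inr K E₁ E₂) (LinearMap.inl K V₁ V₂)
        = mu • TensorProduct.map (LinearMap.inr K E₁ E₂) (LinearMap.inl K V₁ V₂)) :
    TreeCompatible K (E₁ × E₂) (V₁ × V₂) Φ ↔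
      TreeCompatible K E₁ V₁ φ₁ ∧ TreeCompatible K E₂ V₂ φ₂ := by
  refine ⟨fun H => ⟨H.of_intertwines ?_ h11, H.of_intertwines ?_ h22⟩, fun ⟨h₁, h₂⟩ => ?_⟩
  · exact map_injective_of_flat_flat _ _ (inl_injective ..)
      (map_injective_of_flat_flat _ _ (inl_injective ..) (inl_injective ..))
  · exact map_injective_of_flat_flat _ _ (inr_injective ..)
      (map_injective_of_flat_flat _ _ (inr_injective ..) (inr_injective ..))
  replace h12 := comp_eq_comp_smul_id h12
  replace h21 := comp_eq_comp_smul_id h21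
  unfold TreeCompatible
  -- one goal per summand `D_E^i ⊗ D_E^j ⊗ D_V^k`, in the order `ijk = 111, 112, 121, …, 222`
  ext a b c
  · exact commute_phi13_lTensor_on_tmul h11 h11 h₁ a b c
  · exact commute_phi13_lTensor_on_tmul h12 h12 (commute_act13_smul_id _ _) a b c
  · exact commute_phi13_lTensor_on_tmul h11 h21 (commute_lTensor_smul_id _ _) a b c
  · exact commute_phi13_lTensor_on_tmul h12 h22 (commute_act13_smul_id _ _) a b c
  · exact commute_phi13_lTensor_on_tmul h21 h11 (commute_act13_smul_id _ _) a b c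
  · exact commute_phi13_lTensor_on_tmul h22 h12 (commute_lTensor_smul_id _ _) a b c
  · exact commute_phi13_lTensor_on_tmul h21 h21 (commute_act13_smul_id _ _) a b c
  · exact commute_phi13_lTensor_on_tmul h22 h22 h₂ a b c

/-- The direct sum `Φ = φ¹ ⊕_{λ,μ} φ²` on `(D_E¹ ⊕ D_E²) ⊗ (D_V¹ ⊕ D_V²)` is
tree-compatible if, and only if, both `φ¹` and `φ²` are tree-compatible. -/
theorem directSum_treeCompatible (K : Type*) [Field K] [CharZero K]
    (E₁ E₂ V₁ V₂ : Type*)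
    [AddCommGroup E₁] [Module K E₁] [AddCommGroup E₂] [Module K E₂]
    [AddCommGroup V₁] [Module K V₁] [AddCommGroup V₂] [Module K V₂]
    (φ₁ : TensorProduct K E₁ V₁ →ₗ[K] TensorProduct K E₁ V₁)
    (φ₂ : TensorProduct K E₂ V₂ →ₗ[K] TensorProduct K E₂ V₂)
    (lam mu : K)
    (Φ : TensorProduct K (E₁ × E₂) (V₁ × V₂) →ₗ[K] TensorProduct K (E₁ × E₂) (V₁ × V₂))
    (h11 : Φ ∘ₗ TensorProduct.map (LinearMap.inl K E₁ E₂) (LinearMap.inl K V₁ V₂)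
        = TensorProduct.map (LinearMap.inl K E₁ E₂) (LinearMap.inl K V₁ V₂) ∘ₗ φ₁)
    (h22 : Φ ∘ₗ TensorProduct.map (LinearMap.inr K E₁ E₂) (LinearMap.inr K V₁ V₂)
        = TensorProduct.map (LinearMap.inr K E₁ E₂) (LinearMap.inr K V₁ V₂) ∘ₗ φ₂)
    (h12 : Φ ∘ₗ TensorProduct.map (LinearMap.inl K E₁ E₂) (LinearMap.inr K V₁ V₂)
        = lam • TensorProduct.map (LinearMap.inl K E₁ E₂) (LinearMap.inr K V₁ V₂))
    (h21 : Φ ∘ₗ TensorProduct.map (LinearMap.inr K E₁ E₂) (LinearMap.inl K V₁ V₂)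
        = mu • TensorProduct.map (LinearMap.inr K E₁ E₂) (LinearMap.inl K V₁ V₂)) :
    TreeCompatible K (E₁ × E₂) (V₁ × V₂) Φ ↔
      TreeCompatible K E₁ V₁ φ₁ ∧ TreeCompatible K E₂ V₂ φ₂ :=
  directSum_treeCompatible_general K E₁ E₂ V₁ V₂ φ₁ φ₂ lam mu Φ h11 h22 h12 h21
end

section
/- Let φ : D_E ⊗ D_V → D_E ⊗ D_V and φ' : D'_E ⊗ D'_V → D'_E ⊗ D'_V be two tree-compatible K-linear maps. Let Φ be the K-linear endomorphism of (D_E ⊗ D'_E) ⊗ (D_V ⊗ D'_V) corresponding to φ ⊗ φ' under the natural isomorphism (D_E ⊗ D_V) ⊗ (D'_E ⊗ D'_V) ≅ (D_E ⊗ D'_E) ⊗ (D_V ⊗ D'_V) that interchanges the two middle tensor factors; explicitly, if φ(a ⊗ b) = Σ_i φ_E^i(a) ⊗ φ_V^i(b) and φ'(a' ⊗ b') = Σ_j φ'^j_E(a') ⊗ φ'^j_V(b'), then Φ((a ⊗ a') ⊗ (b ⊗ b')) = Σ_i Σ_j (φ_E^i(a) ⊗ φ'^j_E(a')) ⊗ (φ_V^i(b)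 ⊗ φ'^j_V(b')). Then Φ is tree-compatible (with edge space D_E ⊗ D'_E and vertex space D_V ⊗ D'_V). -/
open TensorProduct LinearMap

section aux
variable {K : Type*} [CommSemiring K]
  {M N P Q M' N' P' Q' : Type*}
  [AddCommMonoid M] [Module K M] [AddCommMonoid N] [Module K N]
  [AddCommMonoid P] [Module K P] [AddCommMonoid Q] [Module K Q]
  [AddCommMonoid M'] [Module K M'] [AddCommMonoid N'] [Module K N']
  [AddCommMonoid P'] [Module K P'] [AddCommMonoid Q'] [Module K Q']

lemma ttc_natural (f : M →ₗ[K] M') (g : N →ₗ[K] N') (h : P →ₗ[K] P') (k : Q →ₗ[K] Q') :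
    TensorProduct.map (TensorProduct.map f h) (TensorProduct.map g k) ∘ₗ
      (tensorTensorTensorComm K M N P Q).toLinearMap
    = (tensorTensorTensorComm K M' N' P' Q').toLinearMap ∘ₗ
      TensorProduct.map (TensorProduct.map f g) (TensorProduct.map h k) := by
  ext m n p q; simp
end aux

section main
variable (K : Type*) [Field K]
    (E V E' V' : Type*)
    [AddCommGroup E] [Module K E] [AddCommGroup V] [Module K V]
    [AddCommGroup E'] [Module K E'] [AddCommGroup V'] [Module K V']

/-- Reshuffle `(E⊗E')⊗((E⊗E')⊗(V⊗V')) ≃ (E⊗(E⊗V))⊗(E'⊗(E'⊗V'))`. -/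
noncomputable def sigmaEquiv :
    TensorProduct K (TensorProduct K E E')
        (TensorProduct K (TensorProduct K E E') (TensorProduct K V V'))
      ≃ₗ[K]
    TensorProduct K (TensorProduct K E (TensorProduct K E V))
        (TensorProduct K E' (TensorProduct K E' V')) :=
  (LinearEquiv.lTensor (TensorProduct K E E')
      (tensorTensorTensorComm K E V E' V').symm).trans
    (tensorTensorTensorComm K E E' (TensorProduct K E V) (TensorProduct K E' V'))

variable (φ : TensorProduct K E V →ₗ[K] TensorProduct K E V)
    (φ' : TensorProduct K E' V' →ₗ[K] TensorProduct K E' V')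

/-- Conjugation identity for `lTensor`. -/
lemma lTensor_big :
    LinearMap.lTensor (TensorProduct K E E')
      ((tensorTensorTensorComm K E V E' V').toLinearMap ∘ₗ
        TensorProduct.map φ φ' ∘ₗ
        (tensorTensorTensorComm K E V E' V').symm.toLinearMap)
    = (sigmaEquiv K E V E' V').symm.toLinearMap ∘ₗ
      TensorProduct.map (LinearMap.lTensor E φ) (LinearMap.lTensor E' φ') ∘ₗ
      (sigmaEquiv K E V E' V').toLinearMap := by
  have h2 : TensorProduct.map (LinearMap.lTensor E φ) (LinearMap.lTensor E' φ') ∘ₗ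
      (tensorTensorTensorComm K E E' (TensorProduct K E V) (TensorProduct K E' V')).toLinearMap
      = (tensorTensorTensorComm K E E' (TensorProduct K E V) (TensorProduct K E' V')).toLinearMap
        ∘ₗ LinearMap.lTensor (TensorProduct K E E') (TensorProduct.map φ φ') := by
    simpa [TensorProduct.map_id, LinearMap.lTensor] using
      ttc_natural (K := K) (LinearMap.id : E →ₗ[K] E) (LinearMap.id : E' →ₗ[K] E') φ φ'
  have hσ : (sigmaEquiv K E V E' V').toLinearMap
      = (tensorTensorTensorComm K E E' (TensorProduct K E V) (TensorProduct K E' V')).toLinearMap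
        ∘ₗ LinearMap.lTensor (TensorProduct K E E')
            (tensorTensorTensorComm K E V E' V').symm.toLinearMap := rfl
  have hσs : (sigmaEquiv K E V E' V').symm.toLinearMap
      = LinearMap.lTensor (TensorProduct K E E')
            (tensorTensorTensorComm K E V E' V').toLinearMap
        ∘ₗ (tensorTensorTensorComm K E E' (TensorProduct K E V)
            (TensorProduct K E' V')).symm.toLinearMap := rfl
  refine LinearMap.ext fun x => ?_
  simp only [hσ, hσs, LinearMap.comp_apply, LinearMap.lTensor_comp]
  have hx : ∀ y, TensorProduct.map (LinearMap.lTensor E φ) (LinearMap.lTensor E' φ')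
      ((tensorTensorTensorComm K E E' (TensorProduct K E V) (TensorProduct K E' V')).toLinearMap y)
      = (tensorTensorTensorComm K E E' (TensorProduct K E V) (TensorProduct K E' V')).toLinearMap
          (LinearMap.lTensor (TensorProduct K E E') (TensorProduct.map φ φ') y) := fun y => by
    simpa using LinearMap.congr_fun h2 y
  rw [hx]
  simp only [LinearEquiv.coe_coe, LinearEquiv.symm_apply_apply]

lemma sigma_leftComm :
    (sigmaEquiv K E V E' V').toLinearMap ∘ₗ
      (TensorProduct.leftComm K (TensorProduct K E E') (TensorProduct K E E')
        (TensorProduct K V V')).toLinearMap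
    = TensorProduct.map (TensorProduct.leftComm K E E V).toLinearMap
        (TensorProduct.leftComm K E' E' V').toLinearMap ∘ₗ
      (sigmaEquiv K E V E' V').toLinearMap := by
  ext a a' b b' v v'
  simp [sigmaEquiv]

lemma phi13_big :
    phi13 K (TensorProduct K E E') (TensorProduct K V V')
      ((tensorTensorTensorComm K E V E' V').toLinearMap ∘ₗ
        TensorProduct.map φ φ' ∘ₗ
        (tensorTensorTensorComm K E V E' V').symm.toLinearMap)
    = (sigmaEquiv K E V E' V').symm.toLinearMap ∘ₗ
      TensorProduct.map (phi13 K E V φ) (phi13 K E' V' φ') ∘ₗ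
      (sigmaEquiv K E V E' V').toLinearMap := by
  have hB := sigma_leftComm K E V E' V'
  have hB' : (TensorProduct.leftComm K (TensorProduct K E E') (TensorProduct K E E')
        (TensorProduct K V V')).toLinearMap ∘ₗ (sigmaEquiv K E V E' V').symm.toLinearMap
      = (sigmaEquiv K E V E' V').symm.toLinearMap ∘ₗ
        TensorProduct.map (TensorProduct.leftComm K E E V).toLinearMap
          (TensorProduct.leftComm K E' E' V').toLinearMap := by
    refine LinearMap.ext fun x => ?_
    apply (sigmaEquiv K E V E' V').injective
    have := LinearMap.congr_fun hB ((sigmaEquiv K E V E' V').symm x)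
    simp only [LinearMap.comp_apply, LinearEquiv.coe_coe,
      LinearEquiv.apply_symm_apply] at this ⊢
    rw [this]
  rw [phi13, lTensor_big]
  refine LinearMap.ext fun x => ?_
  simp only [LinearMap.comp_apply]
  rw [show ∀ y, (TensorProduct.leftComm K (TensorProduct K E E') (TensorProduct K E E')
        (TensorProduct K V V')).toLinearMap ((sigmaEquiv K E V E' V').symm.toLinearMap y)
      = (sigmaEquiv K E V E' V').symm.toLinearMap
        (TensorProduct.map (TensorProduct.leftComm K E E V).toLinearMap
          (TensorProduct.leftComm K E' E' V').toLinearMap y)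
    from fun y => LinearMap.congr_fun hB' y]
  rw [show ∀ y, (sigmaEquiv K E V E' V').toLinearMap
        ((TensorProduct.leftComm K (TensorProduct K E E') (TensorProduct K E E')
          (TensorProduct K V V')).toLinearMap y)
      = TensorProduct.map (TensorProduct.leftComm K E E V).toLinearMap
          (TensorProduct.leftComm K E' E' V').toLinearMap
          ((sigmaEquiv K E V E' V').toLinearMap y)
    from fun y => LinearMap.congr_fun hB y]
  simp only [LinearEquiv.coe_coe, LinearEquiv.apply_symm_apply, phi13]
  congr 1
  simp only [← LinearMap.comp_apply, ← TensorProduct.map_comp]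

end main

/-- If `φ` and `φ'` are tree-compatible, then the endomorphism of
`(D_E ⊗ D'_E) ⊗ (D_V ⊗ D'_V)` corresponding to `φ ⊗ φ'` under the middle-interchange
isomorphism is tree-compatible. -/
theorem tensorProduct_treeCompatible (K : Type*) [Field K] [CharZero K]
    (E V E' V' : Type*)
    [AddCommGroup E] [Module K E] [AddCommGroup V] [Module K V]
    [AddCommGroup E'] [Module K E'] [AddCommGroup V'] [Module K V']
    (φ : TensorProduct K E V →ₗ[K] TensorProduct K E V)
    (φ' : TensorProduct K E' V' →ₗ[K] TensorProduct K E' V')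
    (hφ : TreeCompatible K E V φ) (hφ' : TreeCompatible K E' V' φ') :
    TreeCompatible K (TensorProduct K E E') (TensorProduct K V V')
      ((TensorProduct.tensorTensorTensorComm K E V E' V').toLinearMap ∘ₗ
        TensorProduct.map φ φ' ∘ₗ
        (TensorProduct.tensorTensorTensorComm K E V E' V').symm.toLinearMap) := by
  unfold TreeCompatible at hφ hφ' ⊢
  rw [phi13_big, lTensor_big]
  refine LinearMap.ext fun x => ?_
  simp only [LinearMap.comp_apply, LinearEquiv.coe_coe, LinearEquiv.apply_symm_apply]
  rw [← LinearMap.comp_apply (TensorProduct.map _ _) (TensorProduct.map _ _),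
      ← LinearMap.comp_apply (TensorProduct.map _ _) (TensorProduct.map _ _),
      ← TensorProduct.map_comp, ← TensorProduct.map_comp, hφ, hφ']
end

section
/- Let (V, ◁) be a D_E-multiple pre-Lie algebra. Then the K-bilinear product on D_E ⊗ V determined by (a ⊗ x) ◁ (a' ⊗ y) = a' ⊗ (x ◁_a y), for a, a' ∈ D_E and x, y ∈ V, satisfies the left pre-Lie identity: for all u, v, w ∈ D_E ⊗ V, u ◁ (v ◁ w) − (u ◁ v) ◁ w = v ◁ (u ◁ w) − (v ◁ u) ◁ w. -/
open TensorProduct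

/-- Let `(V, ◁)` be a `D_E`-multiple pre-Lie algebra, with the product written in curried
form `t : D_E →ₗ V →ₗ V →ₗ V`, `t a x y = x ◁_a y`. Then the bilinear product `m` on
`D_E ⊗ V` determined by `m (a ⊗ x) (a' ⊗ y) = a' ⊗ (x ◁_a y)` satisfies the left pre-Lie
identity. -/
theorem multiplePreLie_gives_preLie (K : Type*) [Field K] [CharZero K]
    (E V : Type*) [AddCommGroup E] [Module K E] [AddCommGroup V] [Module K V]
    (t : E →ₗ[K] V →ₗ[K] V →ₗ[K] V)
    (ht : ∀ (a a' : E) (x y z : V),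
      t a x (t a' y z) - t a' (t a x y) z = t a' y (t a x z) - t a (t a' y x) z)
    (m : TensorProduct K E V →ₗ[K] TensorProduct K E V →ₗ[K] TensorProduct K E V)
    (hm : ∀ (a a' : E) (x y : V), m (a ⊗ₜ x) (a' ⊗ₜ y) = a' ⊗ₜ[K] (t a x y)) :
    ∀ u v w : TensorProduct K E V,
      m u (m v w) - m (m u v) w = m v (m u w) - m (m v u) w := by
  intro u v w
  induction u using TensorProduct.induction_on with
  | zero => simp
  | add u1 u2 h1 h2 =>
    simp only [map_add, LinearMap.add_apply] at h1 h2 ⊢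
    rw [add_sub_add_comm, h1, h2, ← add_sub_add_comm]
  | tmul a x =>
    induction v using TensorProduct.induction_on with
    | zero => simp
    | add v1 v2 h1 h2 =>
      simp only [map_add, LinearMap.add_apply] at h1 h2 ⊢
      rw [add_sub_add_comm, h1, h2, ← add_sub_add_comm]
    | tmul b y =>
      induction w using TensorProduct.induction_on with
      | zero => simp
      | add w1 w2 h1 h2 =>
        simp only [map_add] at h1 h2 ⊢
        rw [add_sub_add_comm, h1, h2, ← add_sub_add_comm]
      | tmul c z =>
        rw [hm, hm, hm, hm, hm, hm, hm, hm, ← TensorProduct.tmul_sub,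
          ← TensorProduct.tmul_sub, ht]
end

section
/- Let m, n ≥ 1 and let (A_{ij})_{1 ≤ i,j ≤ m} be a family of n×n matrices over K. Let φ be the K-linear endomorphism of K^m ⊗ K^n determined on the standard basis by φ(e_j ⊗ v) = Σ_{i=1}^m e_i ⊗ (A_{ij} v) for all j ∈ {1,…,m} and v ∈ K^n (equivalently, the matrix of φ in the basis (e_i ⊗ f_k) is the block matrix with (i,j) block A_{ij}). Then φ is tree-compatible if, and only if, for all i, j, k, l ∈ {1,…,m}, the matrices A_{ij} and A_{kl} commute: A_{ij} A_{kl} = A_{kl} A_{ij}. -/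
open TensorProduct

/-! On `e_a ⊗ e_b ⊗ v`, both `φ₁₃ ∘ φ₂₃` and `φ₂₃ ∘ φ₁₃` give `∑_{k,i} e_k ⊗ e_i ⊗ w_{ki}`, with
`w_{ki} = A_{ka} A_{ib} v` for the first and `w_{ki} = A_{ib} A_{ka} v` for the second, so comparing
coefficients shows that tree-compatibility is exactly the pairwise commutation of the blocks. -/

namespace TreeCompatible

section Coeff

variable {R ι M : Type*} [CommSemiring R] [AddCommMonoid M] [Module R M]

noncomputable def coeff (k : ι) : (ι → R) ⊗[R] M →ₗ[R] M :=
  TensorProduct.lid R M ∘ₗ (LinearMap.proj k).rTensor M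

@[simp]
lemma coeff_tmul (k : ι) (x : ι → R) (m : M) : coeff k (x ⊗ₜ[R] m) = x k • m := by
  simp [coeff]

variable [Fintype ι] [DecidableEq ι]

lemma coeff_sum_single_tmul (k : ι) (x : ι → M) :
    coeff k (∑ i, Pi.single i (1 : R) ⊗ₜ[R] x i) = x k := by
  simp [Pi.single_apply]

lemma sum_single_tmul_inj {x y : ι → M} :
    ∑ i, Pi.single i (1 : R) ⊗ₜ[R] x i = ∑ i, Pi.single i (1 : R) ⊗ₜ[R] y i ↔ x = y := by
  refine ⟨fun h ↦ funext fun k ↦ ?_, fun h ↦ h ▸ rfl⟩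
  simpa only [coeff_sum_single_tmul] using congrArg (coeff k) h

end Coeff

variable {R ι V : Type*} [CommSemiring R] [Fintype ι] [DecidableEq ι]
  [AddCommMonoid V] [Module R V]

lemma ext_single_tmul_single_tmul {N : Type*} [AddCommMonoid N] [Module R N]
    {f g : (ι → R) ⊗[R] ((ι → R) ⊗[R] V) →ₗ[R] N}
    (h : ∀ a b v, f (Pi.single a 1 ⊗ₜ (Pi.single b 1 ⊗ₜ v)) =
      g (Pi.single a 1 ⊗ₜ (Pi.single b 1 ⊗ₜ v))) : f = g := by
  ext a b v
  exact h a b v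

variable (B : ι → ι → Module.End R V) {φ : (ι → R) ⊗[R] V →ₗ[R] (ι → R) ⊗[R] V}
  (hφ : ∀ j v, φ (Pi.single j 1 ⊗ₜ v) = ∑ i, Pi.single i 1 ⊗ₜ B i j v)
include hφ

lemma lTensor_single_tmul (a b : ι) (v : V) :
    φ.lTensor (ι → R) (Pi.single a 1 ⊗ₜ (Pi.single b 1 ⊗ₜ v)) =
      Pi.single a 1 ⊗ₜ ∑ i, Pi.single i 1 ⊗ₜ B i b v := by
  rw [LinearMap.lTensor_tmul, hφ]

lemma phi13_single_tmul (a i : ι) (w : V) :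
    phi13 R (ι → R) V φ (Pi.single a 1 ⊗ₜ (Pi.single i 1 ⊗ₜ w)) =
      ∑ k, Pi.single k 1 ⊗ₜ (Pi.single i 1 ⊗ₜ B k a w) := by
  simp [phi13, hφ, tmul_sum]

lemma phi13_comp_lTensor_single_tmul (a b : ι) (v : V) :
    (phi13 R (ι → R) V φ ∘ₗ φ.lTensor (ι → R)) (Pi.single a 1 ⊗ₜ (Pi.single b 1 ⊗ₜ v)) =
      ∑ k, Pi.single k 1 ⊗ₜ ∑ i, Pi.single i 1 ⊗ₜ B k a (B i b v) := by
  simp_rw [LinearMap.comp_apply, lTensor_single_tmul B hφ, tmul_sum, map_sum,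
    phi13_single_tmul B hφ]
  exact Finset.sum_comm

lemma lTensor_comp_phi13_single_tmul (a b : ι) (v : V) :
    (φ.lTensor (ι → R) ∘ₗ phi13 R (ι → R) V φ) (Pi.single a 1 ⊗ₜ (Pi.single b 1 ⊗ₜ v)) =
      ∑ k, Pi.single k 1 ⊗ₜ ∑ i, Pi.single i 1 ⊗ₜ B i b (B k a v) := by
  simp_rw [LinearMap.comp_apply, phi13_single_tmul B hφ, map_sum, lTensor_single_tmul B hφ]

theorem iff_forall_apply_comm :
    TreeCompatible R (ι → R) V φ ↔ ∀ i j k l v, B i j (B k l v) = B k l (B i j v) := by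
  rw [TreeCompatible]
  constructor
  · intro h i j k l v
    have hv := LinearMap.congr_fun h (Pi.single j 1 ⊗ₜ (Pi.single l 1 ⊗ₜ v))
    rw [phi13_comp_lTensor_single_tmul B hφ, lTensor_comp_phi13_single_tmul B hφ] at hv
    exact congrFun (sum_single_tmul_inj.mp (congrFun (sum_single_tmul_inj.mp hv) i)) k
  · intro h
    refine ext_single_tmul_single_tmul fun a b v ↦ ?_
    rw [phi13_comp_lTensor_single_tmul B hφ, lTensor_comp_phi13_single_tmul B hφ,
      sum_single_tmul_inj]
    funext k
    rw [sum_single_tmul_inj]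
    funext i
    exact h k a i b v

theorem iff_commute : TreeCompatible R (ι → R) V φ ↔ ∀ i j k l, Commute (B i j) (B k l) := by
  simp only [iff_forall_apply_comm B hφ, Commute, SemiconjBy, LinearMap.ext_iff,
    Module.End.mul_apply]

end TreeCompatible

theorem treeCompatible_iff_blocks_commute_general (K : Type*) [Field K]
    (m n : ℕ)
    (A : Fin m → Fin m → Matrix (Fin n) (Fin n) K)
    (φ : TensorProduct K (Fin m → K) (Fin n → K) →ₗ[K]
      TensorProduct K (Fin m → K) (Fin n → K))
    (hφ : ∀ (j : Fin m) (v : Fin n → K),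
      φ ((Pi.single j (1 : K)) ⊗ₜ v) = ∑ i, (Pi.single i (1 : K)) ⊗ₜ[K] ((A i j).mulVec v)) :
    TreeCompatible K (Fin m → K) (Fin n → K) φ ↔
      ∀ i j k l, A i j * A k l = A k l * A i j := by
  rw [TreeCompatible.iff_commute (fun i j ↦ Matrix.toLinAlgEquiv' (A i j)) hφ]
  exact forall₄_congr fun i j k l ↦ commute_map_iff Matrix.toLinAlgEquiv'.injective

/-- With `D_E = K^m`, `D_V = K^n`, and `φ` given by the block matrix with blocks
`A_{ij}`, the map `φ` is tree-compatible iff all the blocks pairwise commute. -/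
theorem treeCompatible_iff_blocks_commute (K : Type*) [Field K] [CharZero K]
    (m n : ℕ) (hm : 1 ≤ m) (hn : 1 ≤ n)
    (A : Fin m → Fin m → Matrix (Fin n) (Fin n) K)
    (φ : TensorProduct K (Fin m → K) (Fin n → K) →ₗ[K]
      TensorProduct K (Fin m → K) (Fin n → K))
    (hφ : ∀ (j : Fin m) (v : Fin n → K),
      φ ((Pi.single j (1 : K)) ⊗ₜ v) = ∑ i, (Pi.single i (1 : K)) ⊗ₜ[K] ((A i j).mulVec v)) :
    TreeCompatible K (Fin m → K) (Fin n → K) φ ↔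
      ∀ i j k l, A i j * A k l = A k l * A i j :=
  treeCompatible_iff_blocks_commute_general K m n A φ hφ
end

section
/- Let D_E be an m-dimensional complex vector space and D_V a 2-dimensional complex vector space, and let φ be a ℂ-linear endomorphism of D_E ⊗ D_V. Then φ is tree-compatible if, and only if, there exist a basis (a_1,…,a_m) of D_E, a basis (b_1, b_2) of D_V, and matrices A = (a_{ij}), B = (b_{ij}) ∈ M_m(ℂ) such that the matrix of φ in the basis (a_1 ⊗ b_1, a_1 ⊗ b_2, …, a_m ⊗ b_1, a_m ⊗ b_2) is the 2m × 2m block matrix whose (i,j) 2×2 block is J(a_{ij}, b_{ij}) for all i, j, or the 2m × 2m block matrix whose (i,j) 2×2 block is D(a_{ij}, b_{ij}) for all i, j. -/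
open TensorProduct

/-!
Write `φ (e ⊗ c k) = ∑ i, φᵢₖ e ⊗ c i` in a basis `c₀, c₁` of `D_V`. Tree-compatibility says
`∑ i, φⱼᵢ ⊗ φᵢₖ = ∑ i, φᵢₖ ⊗ φⱼᵢ` for all `j, k`; in dimension two this means that `φ₀₁`, `φ₁₀` and
`φ₀₀ - φ₁₁` pairwise have symmetric tensor products, so they are multiples of a single `X`, and
`φ = S ⊗ 1 + X ⊗ μ` for some `μ ∈ End D_V`. Conversely every such map is tree-compatible, because
`φ₁₃` and `φ₂₃` let `S, X` act on different copies of `D_E` while `1` and `μ` commute. Putting `μ`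
in Jordan form, `J(λ, α)` or `D(λ, β)`, gives the two block shapes.
-/

open LinearMap Module

section CommSemiring

variable {K E V ι : Type*} [CommSemiring K] [AddCommMonoid E] [Module K E] [AddCommMonoid V]
  [Module K V]

theorem treeCompatible_map_add_map (S X : E →ₗ[K] E) (μ : V →ₗ[K] V) :
    TreeCompatible K E V (map S id + map X μ) := by
  refine TensorProduct.ext_threefold' fun x y v => ?_
  simp [phi13, leftComm_tmul]
  abel

noncomputable def blockEntry (c : Basis ι K V) (φ : E ⊗[K] V →ₗ[K] E ⊗[K] V) (i k : ι) :
    E →ₗ[K] E :=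
  (TensorProduct.rid K E).toLinearMap ∘ₗ lTensor E (c.coord i) ∘ₗ φ ∘ₗ (mk K E V).flip (c k)

variable [Fintype ι]

theorem apply_tmul_basis_eq_sum_blockEntry (c : Basis ι K V) (φ : E ⊗[K] V →ₗ[K] E ⊗[K] V)
    (e : E) (k : ι) : φ (e ⊗ₜ c k) = ∑ i, blockEntry c φ i k e ⊗ₜ c i := by
  classical
  conv_lhs => rw [← (equivFinsuppOfBasisRight c).symm_apply_apply (φ (e ⊗ₜ c k)),
    equivFinsuppOfBasisRight_symm_apply, Finsupp.sum_fintype _ _ (by simp)]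
  simp [equivFinsuppOfBasisRight_apply, blockEntry]

theorem TreeCompatible.sum_blockEntry_tmul_comm {φ : E ⊗[K] V →ₗ[K] E ⊗[K] V}
    (hφ : TreeCompatible K E V φ) (c : Basis ι K V) (j k : ι) (x y : E) :
    ∑ i, blockEntry c φ j i x ⊗ₜ[K] blockEntry c φ i k y =
      ∑ i, blockEntry c φ i k x ⊗ₜ[K] blockEntry c φ j i y := by
  classical
  have h := congrArg (lTensor E ((TensorProduct.rid K E).toLinearMap ∘ₗ lTensor E (c.coord j)))
    (LinearMap.congr_fun hφ (x ⊗ₜ[K] (y ⊗ₜ[K] c k)))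
  simp [phi13, apply_tmul_basis_eq_sum_blockEntry c, tmul_sum, leftComm_tmul,
    Finsupp.single_apply] at h
  simpa only [tmul_ite, tmul_zero, Finset.sum_ite_eq', Finset.mem_univ, if_true] using h

theorem Matrix.sum_smul_tmul_eq_toLin_tmul [DecidableEq ι] (a : Basis ι K E) (A : Matrix ι ι K)
    (j : ι) (v : V) : ∑ i, A i j • (a i ⊗ₜ[K] v) = Matrix.toLin a a A (a j) ⊗ₜ[K] v := by
  simp_rw [Matrix.toLin_self, sum_tmul, smul_tmul']

end CommSemiring

section Field

variable {K : Type*} [Field K]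

theorem LinearMap.exists_eq_smul_of_tmul_comm {M N : Type*} [AddCommGroup M] [Module K M]
    [AddCommGroup N] [Module K N] {f g : M →ₗ[K] N} (hf : f ≠ 0)
    (h : ∀ x y, f x ⊗ₜ[K] g y = g x ⊗ₜ[K] f y) : ∃ c : K, g = c • f := by
  obtain ⟨e, he⟩ : ∃ e, f e ≠ 0 := not_forall.mp fun h' => hf (LinearMap.ext h')
  obtain ⟨ξ, hξ⟩ := Projective.exists_dual_ne_zero K he
  refine ⟨ξ (g e) / ξ (f e), LinearMap.ext fun y => ?_⟩
  have hy := congrArg ((TensorProduct.lid K N).toLinearMap ∘ₗ rTensor N ξ) (h e y)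
  simp only [comp_apply, rTensor_tmul, LinearEquiv.coe_coe, lid_tmul] at hy
  rw [smul_apply, div_eq_inv_mul, mul_smul, ← hy, inv_smul_smul₀ hξ]

theorem LinearMap.exists_smul_triple_of_tmul_comm {M N : Type*} [AddCommGroup M] [Module K M]
    [AddCommGroup N] [Module K N] {f g h : M →ₗ[K] N}
    (hfg : ∀ x y, f x ⊗ₜ[K] g y = g x ⊗ₜ[K] f y) (hfh : ∀ x y, f x ⊗ₜ[K] h y = h x ⊗ₜ[K] f y)
    (hgh : ∀ x y, g x ⊗ₜ[K] h y = h x ⊗ₜ[K] g y) :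
    ∃ (X : M →ₗ[K] N) (s t u : K), f = s • X ∧ g = t • X ∧ h = u • X := by
  by_cases hf : f = 0
  · by_cases hg : g = 0
    · exact ⟨h, 0, 0, 1, by simp [hf], by simp [hg], by simp⟩
    · obtain ⟨u, hu⟩ := exists_eq_smul_of_tmul_comm hg hgh
      exact ⟨g, 0, 1, u, by simp [hf], by simp, hu⟩
  · obtain ⟨t, ht⟩ := exists_eq_smul_of_tmul_comm hf hfg
    obtain ⟨u, hu⟩ := exists_eq_smul_of_tmul_comm hf hfh
    exact ⟨f, 1, t, u, by simp, ht, hu⟩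

theorem TreeCompatible.exists_eq_map_add_map {E V : Type*} [AddCommGroup E]
    [Module K E] [AddCommGroup V] [Module K V] {φ : E ⊗[K] V →ₗ[K] E ⊗[K] V}
    (hφ : TreeCompatible K E V φ) (c : Basis (Fin 2) K V) :
    ∃ (S X : E →ₗ[K] E) (μ : V →ₗ[K] V), φ = map S id + map X μ := by
  set P := blockEntry c φ 0 0
  set Q := blockEntry c φ 0 1
  set R := blockEntry c φ 1 0
  set S := blockEntry c φ 1 1
  have hQR : ∀ x y, Q x ⊗ₜ[K] R y = R x ⊗ₜ[K] Q y := fun x y => by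
    simpa [Fin.sum_univ_two] using hφ.sum_blockEntry_tmul_comm c 0 0 x y
  have hTQ : ∀ x y, (P - S) x ⊗ₜ[K] Q y = Q x ⊗ₜ[K] (P - S) y := fun x y => by
    have h := hφ.sum_blockEntry_tmul_comm c 0 1 x y
    simp only [Fin.sum_univ_two, LinearMap.sub_apply, sub_tmul, tmul_sub] at h ⊢
    linear_combination (norm := module) h
  have hTR : ∀ x y, (P - S) x ⊗ₜ[K] R y = R x ⊗ₜ[K] (P - S) y := fun x y => by
    have h := hφ.sum_blockEntry_tmul_comm c 1 0 x y
    simp only [Fin.sum_univ_two, LinearMap.sub_apply, sub_tmul, tmul_sub] at h ⊢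
    linear_combination (norm := module) -h
  obtain ⟨X, t, q, r, hT, hQ, hR⟩ := exists_smul_triple_of_tmul_comm hTQ hTR hQR
  have hP : P = S + t • X := by rw [← hT]; abel
  have hφ0 (e : E) : φ (e ⊗ₜ c 0) = P e ⊗ₜ c 0 + R e ⊗ₜ c 1 := by
    rw [apply_tmul_basis_eq_sum_blockEntry c φ, Fin.sum_univ_two]
  have hφ1 (e : E) : φ (e ⊗ₜ c 1) = Q e ⊗ₜ c 0 + S e ⊗ₜ c 1 := by
    rw [apply_tmul_basis_eq_sum_blockEntry c φ, Fin.sum_univ_two]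
  refine ⟨S, X, c.constr K ![t • c 0 + r • c 1, q • c 0],
    TensorProduct.ext (LinearMap.ext fun e => c.ext fun k => ?_)⟩
  fin_cases k
  · simp [hφ0, hP, hR, c.constr_basis, tmul_add, add_tmul, smul_tmul', add_assoc]
  · simp [hφ1, hQ, c.constr_basis, smul_tmul', add_comm]

theorem Module.Basis.exists_fin_two_apply_eq {V : Type*} [AddCommGroup V] [Module K V]
    (hV : finrank K V = 2) {v w : V} (h : LinearIndependent K ![v, w]) :
    ∃ b : Basis (Fin 2) K V, b 0 = v ∧ b 1 = w :=
  ⟨basisOfLinearIndependentOfCardEqFinrank h (by simp [hV]), by simp, by simp⟩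

theorem Module.End.exists_basis_fin_two_triangular_or_diagonal {V : Type*}
    [IsAlgClosed K] [AddCommGroup V] [Module K V] [FiniteDimensional K V]
    (hV : finrank K V = 2) (μ : End K V) :
    ∃ (b : Basis (Fin 2) K V) (l : K), μ (b 0) = l • b 0 ∧
      ((∃ α : K, μ (b 1) = α • b 0 + l • b 1) ∨ ∃ β : K, μ (b 1) = β • b 1) := by
  have : Nontrivial V := nontrivial_of_finrank_eq_succ hV
  obtain ⟨l, hl⟩ := μ.exists_eigenvalue
  obtain ⟨v, hv⟩ := hl.exists_hasEigenvector
  obtain ⟨w, hvw⟩ := exists_linearIndependent_pair_of_one_lt_finrank (R := K) (by omega) hv.2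
  obtain ⟨b, hb0, hb1⟩ := Basis.exists_fin_two_apply_eq hV hvw
  obtain ⟨α, β, hw⟩ : ∃ α β : K, μ w = α • v + β • w :=
    ⟨b.repr (μ w) 0, b.repr (μ w) 1, by
      rw [← hb0, ← hb1, ← Fin.sum_univ_two (fun i => b.repr (μ (b 1)) i • b i), b.sum_repr]⟩
  by_cases hβ : β = l
  · exact ⟨b, l, by rw [hb0, hv.apply_eq_smul], Or.inl ⟨α, by rw [hb0, hb1, hw, hβ]⟩⟩
  have hβl : β - l ≠ 0 := sub_ne_zero.2 hβ
  -- `w + γ • v` is an eigenvector for the second eigenvalue `β`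
  set γ := α / (β - l)
  have hvw' : LinearIndependent K ![v, w + γ • v] :=
    (LinearIndependent.pair_iff' hv.2).2 fun a h =>
      (LinearIndependent.pair_iff' hv.2).1 hvw (a - γ) (by rw [sub_smul, h, add_sub_cancel_right])
  obtain ⟨b', hb'0, hb'1⟩ := Basis.exists_fin_two_apply_eq hV hvw'
  refine ⟨b', l, by rw [hb'0, hv.apply_eq_smul], Or.inr ⟨β, ?_⟩⟩
  have hγ : α + γ * l = γ * β := by simp only [γ]; field_simp; ring
  rw [hb'1, map_add, map_smul, hw, hv.apply_eq_smul]
  linear_combination (norm := module) hγ • v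

end Field

/-- Classification of tree-compatible maps when `D_E` is `m`-dimensional over `ℂ` and
`D_V` is 2-dimensional: `φ` is tree-compatible iff in some basis its matrix is a block
matrix all of whose 2×2 blocks are of the form `J(a,b) = [[a,b],[0,a]]`, or all of the
form `D(a,b) = [[a,0],[0,b]]`. -/
theorem treeCompatible_classification_dim_two (m : ℕ) (E V : Type*)
    [AddCommGroup E] [Module ℂ E] [AddCommGroup V] [Module ℂ V]
    [FiniteDimensional ℂ E] [FiniteDimensional ℂ V]
    (hE : Module.finrank ℂ E = m) (hV : Module.finrank ℂ V = 2)
    (φ : TensorProduct ℂ E V →ₗ[ℂ] TensorProduct ℂ E V) :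
    TreeCompatible ℂ E V φ ↔
      ∃ (a : Module.Basis (Fin m) ℂ E) (b : Module.Basis (Fin 2) ℂ V)
        (A B : Matrix (Fin m) (Fin m) ℂ),
        (∀ j : Fin m,
            φ (a j ⊗ₜ b 0) = ∑ i, A i j • (a i ⊗ₜ[ℂ] b 0) ∧
            φ (a j ⊗ₜ b 1) = ∑ i, (B i j • (a i ⊗ₜ[ℂ] b 0) + A i j • (a i ⊗ₜ[ℂ] b 1))) ∨
        (∀ j : Fin m,
            φ (a j ⊗ₜ b 0) = ∑ i, A i j • (a i ⊗ₜ[ℂ] b 0) ∧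
            φ (a j ⊗ₜ b 1) = ∑ i, B i j • (a i ⊗ₜ[ℂ] b 1)) := by
  simp only [Finset.sum_add_distrib, Matrix.sum_smul_tmul_eq_toLin_tmul]
  constructor
  · intro hφ
    obtain ⟨S, X, μ, rfl⟩ := hφ.exists_eq_map_add_map (Module.finBasisOfFinrankEq ℂ V hV)
    let a := Module.finBasisOfFinrankEq ℂ E hE
    obtain ⟨b, l, hb0, ⟨α, hb1⟩ | ⟨β, hb1⟩⟩ :=
      Module.End.exists_basis_fin_two_triangular_or_diagonal hV μ
    · refine ⟨a, b, LinearMap.toMatrix a a (S + l • X),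
        LinearMap.toMatrix a a (α • X), Or.inl fun j => ⟨?_, ?_⟩⟩ <;>
      simp [hb0, hb1, tmul_add, add_tmul, smul_tmul', add_left_comm]
    · refine ⟨a, b, LinearMap.toMatrix a a (S + l • X),
        LinearMap.toMatrix a a (S + β • X), Or.inr fun j => ⟨?_, ?_⟩⟩ <;>
      simp [hb0, hb1, add_tmul, smul_tmul']
  · rintro ⟨a, b, A, B, h | h⟩
    · suffices φ = map (Matrix.toLin a a A) id + map (Matrix.toLin a a B) (b.constr ℂ ![0, b 0]) from
        this ▸ treeCompatible_map_add_map _ _ _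
      refine (a.tensorProduct b).ext fun ⟨j, k⟩ => ?_
      fin_cases k <;> simp [h, b.constr_basis, add_comm]
    · suffices φ = map (Matrix.toLin a a A) id +
          map (Matrix.toLin a a B - Matrix.toLin a a A) (b.constr ℂ ![0, b 1]) from
        this ▸ treeCompatible_map_add_map _ _ _
      refine (a.tensorProduct b).ext fun ⟨j, k⟩ => ?_
      fin_cases k <;> simp [h, b.constr_basis, sub_tmul]
end

section
/- For any λ = (λ_0,…,λ_d) ∈ K^{d+1}, the linear map ∂^λ = Σ_{i=0}^d λ_i ∂^{(i)} : D ⊗ D → D ⊗ D is tree-compatible (with both the edge-decoration space and the vertex-decoration space equal to D). -/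
open TensorProduct

/-!
Reading `e b` as the monomial `x^b`, `∂^{(j)} = L_j ⊗ ∂_j`, where `L_j` lowers the `j`-th
exponent and `∂_j = ∂/∂x_j`. For a map `f ⊗ g` one has `(f ⊗ g)₁₃ = f ⊗ id ⊗ g` and
`(f ⊗ g)₂₃ = id ⊗ f ⊗ g`, so `(f ⊗ g)₁₃` and `(f' ⊗ g')₂₃` commute as soon as `g` and `g'` do.
Expanding `∂^λ = Σ_i (λ_i L_i) ⊗ ∂_i`, tree-compatibility therefore reduces to the commutation
of partial derivatives.
-/

section TreeCompatible

variable {K : Type*} [CommSemiring K] {E V : Type*}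
  [AddCommMonoid E] [Module K E] [AddCommMonoid V] [Module K V]

theorem treeCompatible_iff_commute (φ : Module.End K (E ⊗[K] V)) :
    TreeCompatible K E V φ ↔ Commute (phi13 K E V φ) (φ.lTensor E) :=
  Iff.rfl

theorem lTensor_finsetSum {ι : Type*} (s : Finset ι) (φ : ι → Module.End K V) :
    (∑ i ∈ s, φ i).lTensor E = ∑ i ∈ s, (φ i).lTensor E := by
  simpa only [LinearMap.coe_lTensorHom] using map_sum (LinearMap.lTensorHom (R := K) E) φ s

theorem phi13_finsetSum {ι : Type*} (s : Finset ι) (φ : ι → Module.End K (E ⊗[K] V)) :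
    phi13 K E V (∑ i ∈ s, φ i) = ∑ i ∈ s, phi13 K E V (φ i) := by
  simp only [phi13, ← Module.End.mul_eq_comp, lTensor_finsetSum, Finset.mul_sum, Finset.sum_mul]

theorem phi13_map (f : Module.End K E) (g : Module.End K V) :
    phi13 K E V (map f g) = map f (g.lTensor E) := by
  ext x y z
  simp [phi13]

theorem commute_phi13_map_lTensor_map (f f' : Module.End K E) {g g' : Module.End K V}
    (hg : Commute g g') :
    Commute (phi13 K E V (map f g)) ((map f' g').lTensor E) := by
  rw [phi13_map, commute_iff_eq, Module.End.mul_eq_comp, Module.End.mul_eq_comp,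
    LinearMap.map_comp_lTensor, LinearMap.lTensor_comp_map, LinearMap.lTensor_comp_map,
    LinearMap.map_comp_lTensor, ← Module.End.mul_eq_comp, ← Module.End.mul_eq_comp, hg.eq]

theorem treeCompatible_sum_map {ι : Type*} (s : Finset ι) (f : ι → Module.End K E)
    (g : ι → Module.End K V) (hg : ∀ i j, Commute (g i) (g j)) :
    TreeCompatible K E V (∑ i ∈ s, map (f i) (g i)) := by
  rw [treeCompatible_iff_commute, phi13_finsetSum, lTensor_finsetSum]
  exact Commute.sum_left _ _ _ fun i _ => Commute.sum_right _ _ _ fun j _ =>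
    commute_phi13_map_lTensor_map _ _ (hg i j)

end TreeCompatible

section MonomialBasis

variable {K : Type*} [CommSemiring K] {σ D : Type*} [DecidableEq σ]
  [AddCommMonoid D] [Module K D] (e : Module.Basis (σ → ℕ) K D)

noncomputable def lowering (j : σ) : Module.End K D :=
  e.constr K fun a => if 1 ≤ a j then e (a - Pi.single j 1) else 0

-- The truncated subtraction `a - Pi.single j 1` is harmless: its coefficient `a j` is `0` then.
noncomputable def partialDeriv (j : σ) : Module.End K D :=
  e.constr K fun a => (a j : K) • e (a - Pi.single j 1)

theorem partialDeriv_commute (i j : σ) : Commute (partialDeriv e i) (partialDeriv e j) := by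
  refine e.ext fun c => ?_
  have hcoeff : (c j : K) * ((c - Pi.single j 1 : σ → ℕ) i : K) =
      c i * ((c - Pi.single i 1 : σ → ℕ) j : K) := by
    rcases eq_or_ne i j with rfl | hij
    · rfl
    · simp [Pi.single_eq_of_ne hij, Pi.single_eq_of_ne hij.symm, mul_comm]
  simp only [Module.End.mul_apply, partialDeriv, Module.Basis.constr_basis, map_smul, smul_smul]
  rw [hcoeff, tsub_right_comm]

theorem map_lowering_partialDeriv_tmul (j : σ) (a b : σ → ℕ) :
    map (lowering e j) (partialDeriv e j) (e a ⊗ₜ e b) =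
      if 1 ≤ a j ∧ 1 ≤ b j then (b j : K) • (e (a - Pi.single j 1) ⊗ₜ[K] e (b - Pi.single j 1))
      else 0 := by
  simp only [map_tmul, lowering, partialDeriv, Module.Basis.constr_basis, tmul_smul]
  by_cases hb : b j = 0
  · simp [hb]
  · split_ifs <;> simp_all

end MonomialBasis

theorem partial_lambda_treeCompatible_general (K : Type*) [Field K] (d : ℕ)
    (D : Type*) [AddCommGroup D] [Module K D] (e : Module.Basis (Fin (d + 1) → ℕ) K D)
    (del : Fin (d + 1) → (TensorProduct K D D →ₗ[K] TensorProduct K D D))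
    (hdel : ∀ (j : Fin (d + 1)) (a b : Fin (d + 1) → ℕ),
      del j (e a ⊗ₜ e b) =
        if 1 ≤ a j ∧ 1 ≤ b j then
          (b j : K) • (e (a - Pi.single j 1) ⊗ₜ[K] e (b - Pi.single j 1))
        else 0)
    (lam : Fin (d + 1) → K) :
    TreeCompatible K D D (∑ i, lam i • del i) := by
  have hdel_eq : ∀ j, del j = map (lowering e j) (partialDeriv e j) := fun j =>
    (e.tensorProduct e).ext fun ⟨a, b⟩ => by
      rw [Module.Basis.tensorProduct_apply, hdel, map_lowering_partialDeriv_tmul]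
  simp only [hdel_eq, ← map_smul_left]
  exact treeCompatible_sum_map _ _ _ fun i j => partialDeriv_commute e i j

/-- For any `λ ∈ K^{d+1}`, the map `∂^λ = Σ_i λ_i ∂^{(i)} : D ⊗ D → D ⊗ D` is
tree-compatible, where `D` is the free `K`-vector space on `ℕ^{d+1}` (a vector space
with a basis `e` indexed by `ℕ^{d+1}`). -/
theorem partial_lambda_treeCompatible (K : Type*) [Field K] [CharZero K] (d : ℕ)
    (D : Type*) [AddCommGroup D] [Module K D] (e : Module.Basis (Fin (d + 1) → ℕ) K D)
    (del : Fin (d + 1) → (TensorProduct K D D →ₗ[K] TensorProduct K D D))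
    (hdel : ∀ (j : Fin (d + 1)) (a b : Fin (d + 1) → ℕ),
      del j (e a ⊗ₜ e b) =
        if 1 ≤ a j ∧ 1 ≤ b j then
          (b j : K) • (e (a - Pi.single j 1) ⊗ₜ[K] e (b - Pi.single j 1))
        else 0)
    (lam : Fin (d + 1) → K) :
    TreeCompatible K D D (∑ i, lam i • del i) :=
  partial_lambda_treeCompatible_general K d D e del hdel lam
end

section
/- For any λ ∈ K^{d+1}, any n ∈ ℕ, and any a, b ∈ ℕ^{d+1}, the n-th iterate of ∂^λ on the basis vector a ⊗ b is given by (∂^λ)^n(a ⊗ b) = n! · Σ λ^l · binom(b,l) · (a − l) ⊗ (b − l), where the sum runs over all l ∈ ℕ^{d+1} with l ≤ min(a,b) and |l| = l_0 + ⋯ + l_d = n. -/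
/-!
Induct on `n`. Applying `∂^λ` to the term of index `l` produces, for each `j` with
`l_j < min(a_j, b_j)`, the term of index `l + ε^{(j)}` with coefficient `λ_j (b_j - l_j)`, and
`λ_j (b_j - l_j) λ^l binom(b,l) = (l_j + 1) λ^{l+ε^{(j)}} binom(b, l+ε^{(j)})`. Conversely an index `l'`
with `|l'| = n + 1` is reached from each `l' - ε^{(j)}` with `l'_j ≥ 1`, so it collects
`Σ_j l'_j = n + 1` copies of its own term, which turns `n!` into `(n+1)!`.
-/

open Finset TensorProduct

section Slice

variable {ι : Type*} [DecidableEq ι]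

theorem add_single_le_iff {l m : ι → ℕ} {j : ι} :
    l + Pi.single j 1 ≤ m ↔ l ≤ m ∧ l j < m j := by
  simp only [Pi.le_def, Pi.add_apply, Pi.single_apply]
  constructor
  · intro h
    exact ⟨fun i => le_trans (Nat.le_add_right _ _) (h i), by simpa using h j⟩
  · rintro ⟨hle, hlt⟩ i
    split_ifs with hij
    · subst hij; exact hlt
    · simpa using hle i

theorem sub_single_add_single {l : ι → ℕ} {j : ι} (h : 1 ≤ l j) :
    l - Pi.single j 1 + Pi.single j 1 = l := by
  ext i
  rcases eq_or_ne i j with rfl | hij <;> simp [*]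

variable [Fintype ι]

def boxSlice (m : ι → ℕ) (n : ℕ) : Finset (ι → ℕ) :=
  (Iic m).filter fun l => ∑ i, l i = n

theorem mem_boxSlice {m l : ι → ℕ} {n : ℕ} : l ∈ boxSlice m n ↔ l ≤ m ∧ ∑ i, l i = n := by
  simp [boxSlice]

theorem boxSlice_zero (m : ι → ℕ) : boxSlice m 0 = {0} := by
  ext l
  rw [mem_boxSlice, mem_singleton]
  constructor
  · rintro ⟨-, h⟩
    ext i
    exact sum_eq_zero_iff.1 h i (mem_univ i)
  · rintro rfl
    simp

theorem sum_apply_add_single (l : ι → ℕ) (j : ι) :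
    ∑ i, (l + Pi.single j 1 : ι → ℕ) i = ∑ i, l i + 1 := by
  simp [sum_add_distrib]

theorem sum_boxSlice_add_single {M : Type*} [AddCommMonoid M] (m : ι → ℕ) (n : ℕ) (j : ι)
    (f : (ι → ℕ) → M) :
    ∑ l ∈ (boxSlice m n).filter (fun l => l j < m j), f (l + Pi.single j 1) =
      ∑ l ∈ (boxSlice m (n + 1)).filter (fun l => 1 ≤ l j), f l := by
  refine sum_nbij' (· + Pi.single j 1) (· - Pi.single j 1) ?_ ?_ ?_ ?_ fun _ _ => rfl
  · intro l hl
    simp only [mem_filter, mem_boxSlice] at hl ⊢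
    refine ⟨⟨add_single_le_iff.2 ⟨hl.1.1, hl.2⟩, by rw [sum_apply_add_single, hl.1.2]⟩, by simp⟩
  · intro l hl
    simp only [mem_filter, mem_boxSlice] at hl ⊢
    have hl' := sub_single_add_single hl.2
    rw [← hl', add_single_le_iff, sum_apply_add_single] at hl
    exact ⟨⟨hl.1.1.1, by omega⟩, hl.1.1.2⟩
  · intro l _
    simp
  · intro l hl
    exact sub_single_add_single (mem_filter.1 hl).2

theorem sum_boxSlice_sum_nsmul_add_single {M : Type*} [AddCommMonoid M] (m : ι → ℕ) (n : ℕ)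
    (G : (ι → ℕ) → M) :
    ∑ l ∈ boxSlice m n, ∑ j, (if l j < m j then (l j + 1) • G (l + Pi.single j 1) else 0) =
      (n + 1) • ∑ l ∈ boxSlice m (n + 1), G l := by
  calc _ = ∑ j, ∑ l ∈ (boxSlice m n).filter (fun l => l j < m j),
        (fun l' : ι → ℕ => l' j • G l') (l + Pi.single j 1) := by
          rw [sum_comm]
          refine sum_congr rfl fun j _ => ?_
          rw [sum_filter]
          refine sum_congr rfl fun l _ => by simp
    _ = ∑ j, ∑ l ∈ boxSlice m (n + 1), l j • G l := by
          refine sum_congr rfl fun j _ => ?_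
          rw [sum_boxSlice_add_single m n j (fun l' => l' j • G l'), sum_filter_of_ne]
          exact fun l _ hne => Nat.one_le_iff_ne_zero.2 fun h => hne (by simp [h])
    _ = (n + 1) • ∑ l ∈ boxSlice m (n + 1), G l := by
          rw [sum_comm, smul_sum]
          refine sum_congr rfl fun l hl => ?_
          rw [← sum_smul, (mem_boxSlice.1 hl).2]

end Slice

section Weight

variable {ι K : Type*} [Fintype ι] [DecidableEq ι] [CommSemiring K]

theorem prod_add_single_apply {R : Type*} [CommMonoid R] (f : ι → ℕ → R) (l : ι → ℕ) (j : ι) :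
    ∏ i, f i ((l + Pi.single j 1 : ι → ℕ) i) = f j (l j + 1) * ∏ i ∈ univ.erase j, f i (l i) := by
  rw [← mul_prod_erase univ _ (mem_univ j)]
  congr 1
  · simp
  · refine prod_congr rfl fun i hi => ?_
    simp [ne_of_mem_erase hi]

def weight (lam : ι → K) (b l : ι → ℕ) : K :=
  (∏ i, lam i ^ l i) * ∏ i, ((b i).choose (l i) : K)

theorem weight_add_single (lam : ι → K) (b l : ι → ℕ) (j : ι) :
    lam j * weight lam b l * ((b j - l j : ℕ) : K) =
      (l j + 1) * weight lam b (l + Pi.single j 1) := by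
  have hchoose : ((b j).choose (l j + 1) : K) * (l j + 1) = (b j).choose (l j) * (b j - l j : ℕ) := by
    simpa only [Nat.cast_mul, Nat.cast_add_one] using
      congrArg (Nat.cast : ℕ → K) (Nat.choose_succ_right_eq (b j) (l j))
  simp only [weight, prod_add_single_apply (fun i k => lam i ^ k),
    prod_add_single_apply (fun i k => ((b i).choose k : K)),
    ← mul_prod_erase univ (fun i => lam i ^ l i) (mem_univ j),
    ← mul_prod_erase univ (fun i => ((b i).choose (l i) : K)) (mem_univ j)]
  set P := ∏ i ∈ univ.erase j, lam i ^ l i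
  set Q := ∏ i ∈ univ.erase j, ((b i).choose (l i) : K)
  calc _ = lam j ^ (l j + 1) * P * (((b j).choose (l j) : K) * (b j - l j : ℕ)) * Q := by ring
    _ = _ := by rw [← hchoose]; ring

end Weight

section Operator

variable {ι K D : Type*} [DecidableEq ι] [CommSemiring K] [AddCommMonoid D] [Module K D]

def IsPartialFamily (e : (ι → ℕ) → D) (del : ι → Module.End K (D ⊗[K] D)) : Prop :=
  ∀ j a b, del j (e a ⊗ₜ e b) =
    if 1 ≤ a j ∧ 1 ≤ b j then (b j : K) • (e (a - Pi.single j 1) ⊗ₜ[K] e (b - Pi.single j 1))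
    else 0

variable {e : (ι → ℕ) → D} {del : ι → Module.End K (D ⊗[K] D)}

theorem IsPartialFamily.apply_tmul_sub (hdel : IsPartialFamily e del) (a b l : ι → ℕ) (j : ι) :
    del j (e (a - l) ⊗ₜ e (b - l)) =
      if l j < min (a j) (b j) then
        ((b j - l j : ℕ) : K) • (e (a - (l + Pi.single j 1)) ⊗ₜ[K] e (b - (l + Pi.single j 1)))
      else 0 := by
  simp only [hdel _, tsub_tsub, Pi.sub_apply, lt_min_iff]
  exact if_congr (by omega) rfl rfl

variable [Fintype ι]

theorem IsPartialFamily.sum_smul_apply_weight_smul (hdel : IsPartialFamily e del)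
    (lam : ι → K) (a b l : ι → ℕ) :
    (∑ i, lam i • del i) (weight lam b l • (e (a - l) ⊗ₜ e (b - l))) =
      ∑ j, if l j < min (a j) (b j) then
        (l j + 1) • (weight lam b (l + Pi.single j 1) •
          (e (a - (l + Pi.single j 1)) ⊗ₜ[K] e (b - (l + Pi.single j 1))))
      else 0 := by
  simp only [LinearMap.sum_apply, LinearMap.smul_apply, map_smul, hdel.apply_tmul_sub, smul_sum]
  refine sum_congr rfl fun j _ => ?_
  split_ifs
  · rw [smul_smul, smul_smul, ← Nat.cast_smul_eq_nsmul K, smul_smul]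
    congr 1
    push_cast
    rw [← weight_add_single]
    ring
  · simp

theorem IsPartialFamily.sum_smul_pow_apply (hdel : IsPartialFamily e del)
    (lam : ι → K) (n : ℕ) (a b : ι → ℕ) :
    ((∑ i, lam i • del i) ^ n) (e a ⊗ₜ e b) =
      (n.factorial : K) • ∑ l ∈ boxSlice (fun i => min (a i) (b i)) n,
        weight lam b l • (e (a - l) ⊗ₜ[K] e (b - l)) := by
  induction n with
  | zero => simp [boxSlice_zero, weight]
  | succ n ih =>
    rw [pow_succ', Module.End.mul_apply, ih, map_smul, map_sum,
      sum_congr rfl fun l _ => hdel.sum_smul_apply_weight_smul lam a b l,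
      sum_boxSlice_sum_nsmul_add_single _ n fun l => weight lam b l • (e (a - l) ⊗ₜ[K] e (b - l)),
      Nat.factorial_succ, Nat.cast_mul, mul_smul, Nat.cast_smul_eq_nsmul K (n + 1), smul_comm]

end Operator

theorem partial_lambda_pow_general (K : Type*) [Field K] (d : ℕ)
    (D : Type*) [AddCommGroup D] [Module K D] (e : Module.Basis (Fin (d + 1) → ℕ) K D)
    (del : Fin (d + 1) → (TensorProduct K D D →ₗ[K] TensorProduct K D D))
    (hdel : ∀ (j : Fin (d + 1)) (a b : Fin (d + 1) → ℕ),
      del j (e a ⊗ₜ e b) =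
        if 1 ≤ a j ∧ 1 ≤ b j then
          (b j : K) • (e (a - Pi.single j 1) ⊗ₜ[K] e (b - Pi.single j 1))
        else 0)
    (lam : Fin (d + 1) → K) (n : ℕ) (a b : Fin (d + 1) → ℕ) :
    ((∑ i, lam i • del i : Module.End K (TensorProduct K D D)) ^ n) (e a ⊗ₜ e b) =
      (n.factorial : K) •
        ∑ l ∈ (Finset.Iic (fun i => min (a i) (b i))).filter (fun l => (∑ i, l i) = n),
          ((∏ i, lam i ^ l i) * ∏ i, ((b i).choose (l i) : K)) •
            (e (a - l) ⊗ₜ[K] e (b - l)) :=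
  IsPartialFamily.sum_smul_pow_apply hdel lam n a b

/-- The `n`-th iterate of `∂^λ = Σ_i λ_i ∂^{(i)}` on a basis vector `a ⊗ b` is
`n! · Σ_{l ≤ min(a,b), |l| = n} λ^l · binom(b,l) · (a − l) ⊗ (b − l)`.  Here `D` is the
free `K`-vector space on `ℕ^{d+1}` (a vector space with a basis `e` indexed by `ℕ^{d+1}`). -/
theorem partial_lambda_pow (K : Type*) [Field K] [CharZero K] (d : ℕ)
    (D : Type*) [AddCommGroup D] [Module K D] (e : Module.Basis (Fin (d + 1) → ℕ) K D)
    (del : Fin (d + 1) → (TensorProduct K D D →ₗ[K] TensorProduct K D D))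
    (hdel : ∀ (j : Fin (d + 1)) (a b : Fin (d + 1) → ℕ),
      del j (e a ⊗ₜ e b) =
        if 1 ≤ a j ∧ 1 ≤ b j then
          (b j : K) • (e (a - Pi.single j 1) ⊗ₜ[K] e (b - Pi.single j 1))
        else 0)
    (lam : Fin (d + 1) → K) (n : ℕ) (a b : Fin (d + 1) → ℕ) :
    ((∑ i, lam i • del i : Module.End K (TensorProduct K D D)) ^ n) (e a ⊗ₜ e b) =
      (n.factorial : K) •
        ∑ l ∈ (Finset.Iic (fun i => min (a i) (b i))).filter (fun l => (∑ i, l i) = n),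
          ((∏ i, lam i ^ l i) * ∏ i, ((b i).choose (l i) : K)) •
            (e (a - l) ⊗ₜ[K] e (b - l)) :=
  partial_lambda_pow_general K d D e del hdel lam n a b
end

section
/- For every λ ∈ K^{d+1}, the linear map φ^λ : D ⊗ D → D ⊗ D defined on basis vectors by φ^λ(a ⊗ b) = Σ_{l ≤ min(a,b)} λ^l · binom(b,l) · (a − l) ⊗ (b − l) is tree-compatible (with both the edge-decoration space and the vertex-decoration space equal to D). -/
open TensorProduct

/-!
On a basis vector `a ⊗ b ⊗ c` both composites are double sums over `l` (lowering `a` and `c`)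
and `m` (lowering `b` and `c`). The two index sets `{l ≤ a ⊓ c, m ≤ b ⊓ (c - l)}` and
`{m ≤ b ⊓ c, l ≤ a ⊓ (c - m)}` both describe `l ≤ a, m ≤ b, l + m ≤ c`, and the coefficients agree
by `C(c, l) C(c - l, m) = C(c, m) C(c - m, l)`, both sides being `C(c, l + m) C(l + m, l)`.
-/

open Finset

theorem Nat.choose_mul_choose_sub_comm (c l m : ℕ) :
    c.choose l * (c - l).choose m = c.choose m * (c - m).choose l := by
  calc c.choose l * (c - l).choose m
      = c.choose (l + m) * (l + m).choose l := by
        simpa using (Nat.choose_mul (n := c) (Nat.le_add_right l m)).symm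
    _ = c.choose (l + m) * (l + m).choose m := by rw [Nat.choose_symm_add]
    _ = c.choose m * (c - m).choose l := by
        simpa using Nat.choose_mul (n := c) (Nat.le_add_left m l)

theorem sum_Iic_inf_sum_Iic_inf_tsub_comm {M ι : Type*} [AddCommMonoid M] [Fintype ι]
    [DecidableEq ι] (a b c : ι → ℕ) (f : (ι → ℕ) → (ι → ℕ) → M) :
    ∑ l ∈ Iic (a ⊓ c), ∑ m ∈ Iic (b ⊓ (c - l)), f l m =
      ∑ m ∈ Iic (b ⊓ c), ∑ l ∈ Iic (a ⊓ (c - m)), f l m := by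
  refine sum_comm' fun l m => ?_
  simp only [mem_Iic, Pi.le_def, Pi.sub_apply, le_inf_iff, ← forall_and]
  exact forall_congr' fun i => by omega

theorem prod_choose_mul_prod_choose_sub_comm (R : Type*) [CommSemiring R] {ι : Type*} [Fintype ι]
    (c l m : ι → ℕ) :
    (∏ i, ((c i).choose (l i) : R)) * ∏ i, (((c - l) i).choose (m i) : R) =
      (∏ i, ((c i).choose (m i) : R)) * ∏ i, (((c - m) i).choose (l i) : R) := by
  simp only [← prod_mul_distrib, Pi.sub_apply, ← Nat.cast_mul]
  exact prod_congr rfl fun i _ => congrArg Nat.cast (Nat.choose_mul_choose_sub_comm _ _ _)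

theorem phi13_tmul_tmul {K : Type*} [CommSemiring K] {E V : Type*}
    [AddCommMonoid E] [Module K E] [AddCommMonoid V] [Module K V]
    (φ : TensorProduct K E V →ₗ[K] TensorProduct K E V) (x y : E) (v : V) :
    phi13 K E V φ (x ⊗ₜ (y ⊗ₜ v)) = TensorProduct.leftComm K E E V (y ⊗ₜ φ (x ⊗ₜ v)) :=
  rfl

theorem phi_lambda_treeCompatible_general (K : Type*) [Field K] (d : ℕ)
    (D : Type*) [AddCommGroup D] [Module K D] (e : Module.Basis (Fin (d + 1) → ℕ) K D)
    (lam : Fin (d + 1) → K)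
    (φ : TensorProduct K D D →ₗ[K] TensorProduct K D D)
    (hφ : ∀ a b : Fin (d + 1) → ℕ,
      φ (e a ⊗ₜ e b) =
        ∑ l ∈ Finset.Iic (fun i => min (a i) (b i)),
          ((∏ i, lam i ^ l i) * ∏ i, ((b i).choose (l i) : K)) •
            (e (a - l) ⊗ₜ[K] e (b - l))) :
    TreeCompatible K D D φ := by
  refine (e.tensorProduct (e.tensorProduct e)).ext fun ⟨a, b, c⟩ => ?_
  simp only [Module.Basis.tensorProduct_apply, LinearMap.comp_apply, LinearMap.lTensor_tmul,
    phi13_tmul_tmul, hφ, map_sum, map_smul, tmul_sum, tmul_smul, leftComm_tmul, smul_sum, smul_smul]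
  refine (sum_Iic_inf_sum_Iic_inf_tsub_comm a b c _).symm.trans
    (sum_congr rfl fun l _ => sum_congr rfl fun m _ => ?_)
  rw [tsub_right_comm (a := c)]
  congr 1
  linear_combination (∏ i, lam i ^ l i) * (∏ i, lam i ^ m i) *
    prod_choose_mul_prod_choose_sub_comm K c m l

/-- The map `φ^λ`, defined on basis vectors by
`φ^λ(a ⊗ b) = Σ_{l ≤ min(a,b)} λ^l · binom(b,l) · (a − l) ⊗ (b − l)`, is tree-compatible.
Here `D` is the free `K`-vector space on `ℕ^{d+1}` (a vector space with a basis `e`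
indexed by `ℕ^{d+1}`). -/
theorem phi_lambda_treeCompatible (K : Type*) [Field K] [CharZero K] (d : ℕ)
    (D : Type*) [AddCommGroup D] [Module K D] (e : Module.Basis (Fin (d + 1) → ℕ) K D)
    (lam : Fin (d + 1) → K)
    (φ : TensorProduct K D D →ₗ[K] TensorProduct K D D)
    (hφ : ∀ a b : Fin (d + 1) → ℕ,
      φ (e a ⊗ₜ e b) =
        ∑ l ∈ Finset.Iic (fun i => min (a i) (b i)),
          ((∏ i, lam i ^ l i) * ∏ i, ((b i).choose (l i) : K)) •
            (e (a - l) ⊗ₜ[K] e (b - l))) :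
    TreeCompatible K D D φ :=
  phi_lambda_treeCompatible_general K d D e lam φ hφ
end

section
/- For all λ, μ ∈ K^{d+1}, the maps φ^λ satisfy φ^λ ∘ φ^μ = φ^{λ+μ}, and φ^0 = id_{D ⊗ D}. Consequently, for every λ ∈ K^{d+1}, φ^λ is bijective with inverse φ^{−λ}. -/
/-!
Composing `φ^λ` after `φ^μ` sends `a ⊗ b` to a sum over `n = l + m` in which, coordinatewise,
the coefficient of `(a - n) ⊗ (b - n)` is `Σ_{l ≤ n} C(b,l) C(b-l,n-l) μ^l λ^(n-l)`. The identity
`C(b,l) C(b-l,n-l) = C(b,n) C(n,l)` turns this into `C(b,n) (λ + μ)^n` by the binomial theorem.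
For `λ = 0` only the term `l = 0` survives, so `φ^0 = id`, and the group law then makes `φ^{-λ}`
a two-sided inverse of `φ^λ`.
-/

open TensorProduct

section Reindex

open Finset

variable {α M : Type*} [AddCommMonoid α] [PartialOrder α] [CanonicallyOrderedAdd α] [Sub α]
  [OrderedSub α] [AddLeftReflectLE α] [LocallyFiniteOrderBot α] [AddCommMonoid M]

theorem sum_Iic_sum_Iic_tsub (c : α) (F : α → α → M) :
    ∑ l ∈ Iic c, ∑ m ∈ Iic (c - l), F l m = ∑ n ∈ Iic c, ∑ l ∈ Iic n, F l (n - l) := by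
  rw [sum_sigma', sum_sigma']
  refine sum_nbij' (fun p => ⟨p.1 + p.2, p.1⟩) (fun p => ⟨p.2, p.1 - p.2⟩) ?_ ?_ ?_ ?_ ?_
  · rintro ⟨l, m⟩ h
    simp only [mem_sigma, mem_Iic] at h ⊢
    exact ⟨(le_tsub_iff_left h.1).1 h.2, le_self_add⟩
  · rintro ⟨n, l⟩ h
    simp only [mem_sigma, mem_Iic] at h ⊢
    exact ⟨h.2.trans h.1, tsub_le_tsub_right h.1 l⟩
  · rintro ⟨l, m⟩ -
    simp only [add_tsub_cancel_left]
  · rintro ⟨n, l⟩ h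
    simp only [mem_sigma, mem_Iic] at h
    simp only [add_tsub_cancel_of_le h.2]
  · rintro ⟨l, m⟩ -
    simp only [add_tsub_cancel_left]

end Reindex

section PhiFamily

open Finset

theorem sum_Iic_choose_mul_choose_mul_pow {R : Type*} [CommSemiring R] (x y : R) (n b : ℕ) :
    ∑ j ∈ Iic n, ((b - j).choose (n - j) * b.choose j : R) * (x ^ (n - j) * y ^ j) =
      b.choose n * (x + y) ^ n := by
  rw [← Nat.range_succ_eq_Iic, add_comm x, add_pow, mul_sum]
  refine sum_congr rfl fun j hj => ?_
  have hjn : j ≤ n := Nat.lt_succ_iff.1 (mem_range.1 hj)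
  rw [mul_comm ((b - j).choose (n - j) : R), ← Nat.cast_mul, ← Nat.choose_mul hjn, Nat.cast_mul]
  ring

variable {ι R : Type*} [Fintype ι] [CommSemiring R]

def phiCoeff (lam : ι → R) (b l : ι → ℕ) : R :=
  (∏ i, lam i ^ l i) * ∏ i, ((b i).choose (l i) : R)

theorem phiCoeff_zero_right (lam : ι → R) (b : ι → ℕ) : phiCoeff lam b 0 = 1 := by
  simp [phiCoeff]

theorem phiCoeff_zero_left_of_ne {b l : ι → ℕ} (hl : l ≠ 0) : phiCoeff (0 : ι → R) b l = 0 := by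
  obtain ⟨i, hi⟩ := Function.ne_iff.1 hl
  rw [phiCoeff, prod_eq_zero (mem_univ i) (zero_pow hi), zero_mul]

variable [DecidableEq ι]

theorem sum_phiCoeff_mul_phiCoeff (lam mu : ι → R) (b n : ι → ℕ) :
    ∑ l ∈ Iic n, phiCoeff mu b l * phiCoeff lam (b - l) (n - l) = phiCoeff (lam + mu) b n := by
  have factor : ∀ l, phiCoeff mu b l * phiCoeff lam (b - l) (n - l) =
      ∏ i, ((b i - l i).choose (n i - l i) * (b i).choose (l i) : R) *
        (lam i ^ (n i - l i) * mu i ^ l i) := fun l => by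
    simp only [phiCoeff, prod_mul_distrib, Pi.sub_apply]
    ring
  simp_rw [factor, phiCoeff, Pi.add_apply, mul_comm (∏ i, (lam i + mu i) ^ n i),
    ← prod_mul_distrib, ← sum_Iic_choose_mul_choose_mul_pow, prod_univ_sum]
  rfl

variable {D : Type*} [AddCommMonoid D] [Module R D]

def IsPhiFamily (e : Module.Basis (ι → ℕ) R D) (Φ : (ι → R) → (D ⊗[R] D →ₗ[R] D ⊗[R] D)) :
    Prop :=
  ∀ lam a b, Φ lam (e a ⊗ₜ e b) =
    ∑ l ∈ Iic (a ⊓ b), phiCoeff lam b l • (e (a - l) ⊗ₜ[R] e (b - l))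

namespace IsPhiFamily

variable {e : Module.Basis (ι → ℕ) R D} {Φ : (ι → R) → (D ⊗[R] D →ₗ[R] D ⊗[R] D)}

theorem comp (hΦ : IsPhiFamily e Φ) (lam mu : ι → R) : Φ lam ∘ₗ Φ mu = Φ (lam + mu) := by
  refine (e.tensorProduct e).ext fun ⟨a, b⟩ => ?_
  have inf_tsub : ∀ l : ι → ℕ, (a - l) ⊓ (b - l) = a ⊓ b - l := fun l => by
    ext i; simp only [Pi.inf_apply, Pi.sub_apply]; omega
  rw [Module.Basis.tensorProduct_apply, LinearMap.comp_apply, hΦ mu, map_sum]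
  calc ∑ l ∈ Iic (a ⊓ b), Φ lam (phiCoeff mu b l • e (a - l) ⊗ₜ e (b - l))
    _ = ∑ l ∈ Iic (a ⊓ b), ∑ m ∈ Iic (a ⊓ b - l),
          (phiCoeff mu b l * phiCoeff lam (b - l) m) • e (a - (l + m)) ⊗ₜ e (b - (l + m)) :=
        sum_congr rfl fun l _ => by
          simp_rw [map_smul, hΦ lam, inf_tsub, smul_sum, smul_smul, tsub_tsub]
    _ = ∑ n ∈ Iic (a ⊓ b), ∑ l ∈ Iic n,
          (phiCoeff mu b l * phiCoeff lam (b - l) (n - l)) • e (a - n) ⊗ₜ e (b - n) := by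
        rw [sum_Iic_sum_Iic_tsub]
        exact sum_congr rfl fun n _ => sum_congr rfl fun l hl => by
          rw [add_tsub_cancel_of_le (mem_Iic.1 hl)]
    _ = Φ (lam + mu) (e a ⊗ₜ e b) := by
        simp_rw [← sum_smul, sum_phiCoeff_mul_phiCoeff, hΦ (lam + mu)]

theorem zero_eq_id (hΦ : IsPhiFamily e Φ) : Φ 0 = LinearMap.id := by
  refine (e.tensorProduct e).ext fun ⟨a, b⟩ => ?_
  rw [Module.Basis.tensorProduct_apply, hΦ, LinearMap.id_apply,
    sum_eq_single_of_mem 0 (mem_Iic.2 bot_le) fun l _ hl => by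
      rw [phiCoeff_zero_left_of_ne hl, zero_smul]]
  simp [phiCoeff_zero_right]

end IsPhiFamily

end PhiFamily

theorem phi_lambda_group_general (K : Type*) [Field K] (d : ℕ)
    (D : Type*) [AddCommGroup D] [Module K D] (e : Module.Basis (Fin (d + 1) → ℕ) K D)
    (Φ : (Fin (d + 1) → K) → (TensorProduct K D D →ₗ[K] TensorProduct K D D))
    (hΦ : ∀ (lam : Fin (d + 1) → K) (a b : Fin (d + 1) → ℕ),
      Φ lam (e a ⊗ₜ e b) =
        ∑ l ∈ Finset.Iic (fun i => min (a i) (b i)),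
          ((∏ i, lam i ^ l i) * ∏ i, ((b i).choose (l i) : K)) •
            (e (a - l) ⊗ₜ[K] e (b - l))) :
    (∀ lam mu : Fin (d + 1) → K, Φ lam ∘ₗ Φ mu = Φ (lam + mu)) ∧
      Φ 0 = LinearMap.id ∧
      ∀ lam : Fin (d + 1) → K,
        Function.Bijective (Φ lam) ∧
          Φ lam ∘ₗ Φ (-lam) = LinearMap.id ∧ Φ (-lam) ∘ₗ Φ lam = LinearMap.id := by
  have hfam : IsPhiFamily e Φ := hΦ
  refine ⟨hfam.comp, hfam.zero_eq_id, fun lam => ?_⟩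
  have right_inv : Φ lam ∘ₗ Φ (-lam) = LinearMap.id := by
    rw [hfam.comp, add_neg_cancel, hfam.zero_eq_id]
  have left_inv : Φ (-lam) ∘ₗ Φ lam = LinearMap.id := by
    rw [hfam.comp, neg_add_cancel, hfam.zero_eq_id]
  let Ψ : _ ≃ₗ[K] _ := .ofLinearMap (Φ lam) (Φ (-lam)) right_inv left_inv
  exact ⟨Ψ.bijective, right_inv, left_inv⟩

/-- The maps `φ^λ` satisfy `φ^λ ∘ φ^μ = φ^{λ+μ}` and `φ^0 = id`; consequently each `φ^λ`
is bijective with inverse `φ^{−λ}`.  Here `D` is the free `K`-vector space on `ℕ^{d+1}`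
(a vector space with a basis `e` indexed by `ℕ^{d+1}`), and `φ^λ` is characterized on
basis vectors by `φ^λ(a ⊗ b) = Σ_{l ≤ min(a,b)} λ^l · binom(b,l) · (a − l) ⊗ (b − l)`. -/
theorem phi_lambda_group (K : Type*) [Field K] [CharZero K] (d : ℕ)
    (D : Type*) [AddCommGroup D] [Module K D] (e : Module.Basis (Fin (d + 1) → ℕ) K D)
    (Φ : (Fin (d + 1) → K) → (TensorProduct K D D →ₗ[K] TensorProduct K D D))
    (hΦ : ∀ (lam : Fin (d + 1) → K) (a b : Fin (d + 1) → ℕ),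
      Φ lam (e a ⊗ₜ e b) =
        ∑ l ∈ Finset.Iic (fun i => min (a i) (b i)),
          ((∏ i, lam i ^ l i) * ∏ i, ((b i).choose (l i) : K)) •
            (e (a - l) ⊗ₜ[K] e (b - l))) :
    (∀ lam mu : Fin (d + 1) → K, Φ lam ∘ₗ Φ mu = Φ (lam + mu)) ∧
      Φ 0 = LinearMap.id ∧
      ∀ lam : Fin (d + 1) → K,
        Function.Bijective (Φ lam) ∧
          Φ lam ∘ₗ Φ (-lam) = LinearMap.id ∧ Φ (-lam) ∘ₗ Φ lam = LinearMap.id :=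
  phi_lambda_group_general K d D e Φ hΦ
end

section
/- Let λ = (1,…,1) ∈ K^{d+1} and φ = φ^λ. For i ∈ {0,…,d}, let ψ_V^i : D → D be the linear map defined on basis vectors by ψ_V^i(b) = b + ε^{(i)}, and let ψ_E^i : D → D be the linear map defined on basis vectors by ψ_E^i(a) = a − ε^{(i)} if a_i ≥ 1 and ψ_E^i(a) = 0 if a_i = 0. Then for all i, j ∈ {0,…,d}: (1) ψ_E^i ∘ ψ_E^j = ψ_E^j ∘ ψ_E^i; (2) ψ_V^i ∘ ψ_V^j = ψ_V^j ∘ ψ_V^i; and (3) φ ∘ (ψ_E^i ⊗ id_D) = φ ∘ (id_D ⊗ ψ_V^i) − (id_D ⊗ ψ_V^i) ∘ φ as linear maps D ⊗ D → D ⊗ D. -/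
/-!
Everything is checked on basis vectors, where it becomes a statement about multi-indices.
For the third identity at `a ⊗ b`, Pascal's rule `binom(b + ε, l) = binom(b, l) + binom(b, l - ε)`
splits `φ(a ⊗ (b + ε))` into two sums. The first is `(id ⊗ ψ_V^i)(φ(a ⊗ b))`. In the second only
`l ≥ ε` contribute, and substituting `l = m + ε` turns it into `φ(ψ_E^i(a) ⊗ b)` (both sides
vanish when `a_i = 0`).
-/

open Finset TensorProduct

lemma single_one_le_iff {ι : Type*} [DecidableEq ι] {a : ι → ℕ} {i : ι} :
    Pi.single i 1 ≤ a ↔ 1 ≤ a i := by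
  refine ⟨fun h => by simpa using h i, fun h j => ?_⟩
  rcases eq_or_ne j i with rfl | hj
  · simpa using h
  · simp [hj]

section BinomialSum

variable {ι : Type*} [Fintype ι]

/-- The multi-index binomial coefficient `binom(b, l)`. -/
def piChoose (b l : ι → ℕ) : ℕ := ∏ j, (b j).choose (l j)

lemma piChoose_eq_zero_iff {b l : ι → ℕ} : piChoose b l = 0 ↔ ¬ l ≤ b := by
  simp [piChoose, Finset.prod_eq_zero_iff, Nat.choose_eq_zero_iff, Pi.le_def]

variable [DecidableEq ι]

lemma piChoose_eq_mul_prod_erase (b l : ι → ℕ) (i : ι) :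
    piChoose b l = (b i).choose (l i) * ∏ j ∈ univ.erase i, (b j).choose (l j) :=
  (mul_prod_erase _ _ (mem_univ i)).symm

lemma prod_erase_choose_add_single (b l : ι → ℕ) (i : ι) (x y : ℕ) :
    ∏ j ∈ univ.erase i, ((b + Pi.single i x : ι → ℕ) j).choose ((l + Pi.single i y : ι → ℕ) j) =
      ∏ j ∈ univ.erase i, (b j).choose (l j) :=
  prod_congr rfl fun j hj => by simp [Pi.single_eq_of_ne (ne_of_mem_erase hj)]

lemma piChoose_add_single_of_apply_eq_zero (b : ι → ℕ) {l : ι → ℕ} {i : ι} (hl : l i = 0) :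
    piChoose (b + Pi.single i 1) l = piChoose b l := by
  have h := prod_erase_choose_add_single b l i 1 0
  simp only [Pi.single_zero, add_zero] at h
  rw [piChoose_eq_mul_prod_erase _ _ i, piChoose_eq_mul_prod_erase _ _ i, h, hl]
  simp

lemma piChoose_add_single_add_single (b l : ι → ℕ) (i : ι) :
    piChoose (b + Pi.single i 1) (l + Pi.single i 1) =
      piChoose b (l + Pi.single i 1) + piChoose b l := by
  have h := prod_erase_choose_add_single b l i 0 1
  simp only [Pi.single_zero, add_zero] at h
  rw [piChoose_eq_mul_prod_erase _ _ i, piChoose_eq_mul_prod_erase b _ i,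
    piChoose_eq_mul_prod_erase b l i, prod_erase_choose_add_single, h]
  simp [Nat.choose_succ_succ', add_mul, add_comm]

lemma piChoose_add_single (b l : ι → ℕ) (i : ι) :
    piChoose (b + Pi.single i 1) l =
      piChoose b l + if 1 ≤ l i then piChoose b (l - Pi.single i 1) else 0 := by
  split_ifs with h
  · obtain ⟨m, rfl⟩ := exists_add_of_le (single_one_le_iff.2 h)
    rw [add_tsub_cancel_left, add_comm _ m, piChoose_add_single_add_single, add_comm]
  · rw [piChoose_add_single_of_apply_eq_zero b (by omega), add_zero]

variable {M : Type*} [AddCommMonoid M]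

/-- With `F a b = a ⊗ b` this is `φ^λ(a ⊗ b)` for `λ = (1,…,1)`. -/
def binomialSum (F : (ι → ℕ) → (ι → ℕ) → M) (a b : ι → ℕ) : M :=
  ∑ l ∈ Iic (a ⊓ b), piChoose b l • F (a - l) (b - l)

lemma binomialSum_eq_sum_Iic (F : (ι → ℕ) → (ι → ℕ) → M) (a b : ι → ℕ) :
    binomialSum F a b = ∑ l ∈ Iic a, piChoose b l • F (a - l) (b - l) := by
  refine sum_subset (Iic_subset_Iic.2 inf_le_left) fun l hla hlab => ?_
  have hlb : ¬ l ≤ b := fun hlb => hlab (mem_Iic.2 (le_inf (mem_Iic.1 hla) hlb))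
  rw [piChoose_eq_zero_iff.2 hlb, zero_smul]

lemma map_binomialSum {N : Type*} [AddCommMonoid N] {G : Type*} [FunLike G M N]
    [AddMonoidHomClass G M N] (f : G) (F : (ι → ℕ) → (ι → ℕ) → M) (a b : ι → ℕ) :
    f (binomialSum F a b) = binomialSum (fun x y => f (F x y)) a b := by
  simp [binomialSum, map_sum, map_nsmul]

lemma binomialSum_add_single (F : (ι → ℕ) → (ι → ℕ) → M) (a b : ι → ℕ) (i : ι) :
    binomialSum F a (b + Pi.single i 1) =
      binomialSum (fun x y => F x (y + Pi.single i 1)) a b +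
        if 1 ≤ a i then binomialSum F (a - Pi.single i 1) b else 0 := by
  set ε : ι → ℕ := Pi.single i 1
  have unshifted : ∑ l ∈ Iic a, piChoose b l • F (a - l) (b + ε - l) =
      binomialSum (fun x y => F x (y + ε)) a b := by
    rw [binomialSum_eq_sum_Iic]
    refine sum_congr rfl fun l _ => ?_
    by_cases hlb : l ≤ b
    · rw [tsub_add_eq_add_tsub hlb]
    · rw [piChoose_eq_zero_iff.2 hlb, zero_smul, zero_smul]
  have shifted : ∑ l ∈ Iic a,
      (if 1 ≤ l i then piChoose b (l - ε) else 0) • F (a - l) (b + ε - l) =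
        if 1 ≤ a i then binomialSum F (a - ε) b else 0 := by
    simp_rw [ite_smul, zero_smul, ← sum_filter]
    have hIcc : (Iic a).filter (1 ≤ · i) = Icc ε a := by
      ext; simp [ε, single_one_le_iff, and_comm]
    rw [hIcc]
    by_cases ha : 1 ≤ a i
    · rw [if_pos ha]
      have hmap : Icc ε a = (Iic (a - ε)).map (addRightEmbedding ε) := by
        change Icc ε a = (Icc 0 (a - ε)).map (addRightEmbedding ε)
        rw [map_add_right_Icc, zero_add,
          tsub_add_cancel_of_le (single_one_le_iff.2 ha)]
      rw [hmap, sum_map, binomialSum_eq_sum_Iic]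
      refine sum_congr rfl fun m _ => ?_
      rw [addRightEmbedding_apply, add_tsub_cancel_right, tsub_add_eq_tsub_tsub_swap,
        add_tsub_add_eq_tsub_right]
    · rw [if_neg ha, Icc_eq_empty (mt single_one_le_iff.1 ha), sum_empty]
  rw [binomialSum_eq_sum_Iic, ← unshifted, ← shifted, ← sum_add_distrib]
  exact sum_congr rfl fun l _ => by rw [← add_smul, piChoose_add_single]

end BinomialSum

theorem psi_phi_compatible_general (K : Type*) [Field K] (d : ℕ)
    (D : Type*) [AddCommGroup D] [Module K D] (e : Module.Basis (Fin (d + 1) → ℕ) K D)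
    (φ : TensorProduct K D D →ₗ[K] TensorProduct K D D)
    (hφ : ∀ a b : Fin (d + 1) → ℕ,
      φ (e a ⊗ₜ e b) =
        ∑ l ∈ Finset.Iic (fun i => min (a i) (b i)),
          ((∏ i, (1 : K) ^ l i) * ∏ i, ((b i).choose (l i) : K)) •
            (e (a - l) ⊗ₜ[K] e (b - l)))
    (ψV ψE : Fin (d + 1) → (D →ₗ[K] D))
    (hψV : ∀ (i : Fin (d + 1)) (b : Fin (d + 1) → ℕ),
      ψV i (e b) = e (b + Pi.single i 1))
    (hψE : ∀ (i : Fin (d + 1)) (a : Fin (d + 1) → ℕ),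
      ψE i (e a) = if 1 ≤ a i then e (a - Pi.single i 1) else 0) :
    (∀ i j, ψE i ∘ₗ ψE j = ψE j ∘ₗ ψE i) ∧
      (∀ i j, ψV i ∘ₗ ψV j = ψV j ∘ₗ ψV i) ∧
      ∀ i, φ ∘ₗ LinearMap.rTensor D (ψE i) =
        φ ∘ₗ LinearMap.lTensor D (ψV i) - LinearMap.lTensor D (ψV i) ∘ₗ φ := by
  have hφ' (a b) : φ (e a ⊗ₜ e b) = binomialSum (fun x y => e x ⊗ₜ[K] e y) a b := by
    simp only [hφ, one_pow, prod_const_one, one_mul, ← Nat.cast_prod, Nat.cast_smul_eq_nsmul]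
    rfl
  refine ⟨fun i j => e.ext fun a => ?_, fun i j => e.ext fun b => ?_, fun i => ?_⟩
  · rcases eq_or_ne i j with rfl | hij
    · rfl
    by_cases h1 : 1 ≤ a i <;> by_cases h2 : 1 ≤ a j <;>
      simp [hψE, h1, h2, Pi.single_eq_of_ne hij, Pi.single_eq_of_ne hij.symm, tsub_right_comm]
  · simp only [LinearMap.comp_apply, hψV, add_right_comm]
  · refine (e.tensorProduct e).ext fun ⟨a, b⟩ => ?_
    simp only [Module.Basis.tensorProduct_apply, LinearMap.comp_apply, LinearMap.sub_apply,
      LinearMap.rTensor_tmul, LinearMap.lTensor_tmul, hψE, hψV, ite_tmul, apply_ite φ,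
      map_zero, hφ', map_binomialSum, binomialSum_add_single]
    abel

/-- For `λ = (1,…,1)` and `φ = φ^λ`, the maps `ψ_V^i(b) = b + ε^{(i)}` and
`ψ_E^i(a) = a − ε^{(i)}` if `a_i ≥ 1`, `ψ_E^i(a) = 0` if `a_i = 0`, satisfy: the `ψ_E^i`
pairwise commute, the `ψ_V^i` pairwise commute, and
`φ ∘ (ψ_E^i ⊗ id) = φ ∘ (id ⊗ ψ_V^i) − (id ⊗ ψ_V^i) ∘ φ`.  Here `D` is the free
`K`-vector space on `ℕ^{d+1}` (a vector space with a basis `e` indexed by `ℕ^{d+1}`). -/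
theorem psi_phi_compatible (K : Type*) [Field K] [CharZero K] (d : ℕ)
    (D : Type*) [AddCommGroup D] [Module K D] (e : Module.Basis (Fin (d + 1) → ℕ) K D)
    (φ : TensorProduct K D D →ₗ[K] TensorProduct K D D)
    (hφ : ∀ a b : Fin (d + 1) → ℕ,
      φ (e a ⊗ₜ e b) =
        ∑ l ∈ Finset.Iic (fun i => min (a i) (b i)),
          ((∏ i, (1 : K) ^ l i) * ∏ i, ((b i).choose (l i) : K)) •
            (e (a - l) ⊗ₜ[K] e (b - l)))
    (ψV ψE : Fin (d + 1) → (D →ₗ[K] D))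
    (hψV : ∀ (i : Fin (d + 1)) (b : Fin (d + 1) → ℕ),
      ψV i (e b) = e (b + Pi.single i 1))
    (hψE : ∀ (i : Fin (d + 1)) (a : Fin (d + 1) → ℕ),
      ψE i (e a) = if 1 ≤ a i then e (a - Pi.single i 1) else 0) :
    (∀ i j, ψE i ∘ₗ ψE j = ψE j ∘ₗ ψE i) ∧
      (∀ i j, ψV i ∘ₗ ψV j = ψV j ∘ₗ ψV i) ∧
      ∀ i, φ ∘ₗ LinearMap.rTensor D (ψE i) =
        φ ∘ₗ LinearMap.lTensor D (ψV i) - LinearMap.lTensor D (ψV i) ∘ₗ φ :=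
  psi_phi_compatible_general K d D e φ hφ ψV ψE hψV hψE
end
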